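/- arXiv:2008.01312 — 2 statements merged into one kernel-verified Lean document; each statement's English description precedes it below -/
import Mathlib

section
/- Let B = A + Z with rank(A) = r, and let V̂ ∈ ℝ^{n×r} consist of the top r right singular vectors of B. Then for any q ∈ [1, ∞], ‖A P_{V̂⊥}‖_q ≤ 2‖Z_{max(r)}‖_q. -/
open scoped ENNReal
open Matrix

/-- The `i`-th largest singular value (0-indexed) of a real matrix. -/
noncomputable def sval {m n : ℕ} (A : Matrix (Fin m) (Fin n) ℝ) : ℕ → ℝ := fun i =>
  if h : i < n then
    Real.sqrt ((Matrix.isHermitian_conjTranspose_mul_self A).eigenvalues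
      (Tuple.sort ((Matrix.isHermitian_conjTranspose_mul_self A).eigenvalues) ⟨n - 1 - i, by omega⟩))
  else 0

/-- Truncated Schatten-q norm (ℓ_q norm of the top `r` singular values), q ∈ [1,∞]. -/
noncomputable def schattenTE {m n : ℕ} (q : ℝ≥0∞) (r : ℕ) (A : Matrix (Fin m) (Fin n) ℝ) : ℝ :=
  if q = ∞ then sval A 0
  else (∑ i ∈ Finset.range r, sval A i ^ q.toReal) ^ (1 / q.toReal)

/-- Schatten-q norm, q ∈ [1,∞]. -/
noncomputable def schattenE {m n : ℕ} (q : ℝ≥0∞) (A : Matrix (Fin m) (Fin n) ℝ) : ℝ :=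
  schattenTE q n A

/-- Truncated Schatten-q norm for a real exponent q. -/
noncomputable def schattenTR {m n : ℕ} (q : ℝ) (r : ℕ) (A : Matrix (Fin m) (Fin n) ℝ) : ℝ :=
  (∑ i ∈ Finset.range r, sval A i ^ q) ^ (1 / q)

/-- Schatten-q norm for a real exponent q. -/
noncomputable def schattenR {m n : ℕ} (q : ℝ) (A : Matrix (Fin m) (Fin n) ℝ) : ℝ :=
  schattenTR q n A

/-- `Ahat` is a best rank-`r` approximation of `B` (in Frobenius norm). -/
def IsBestRankApprox {m n : ℕ} (r : ℕ) (B Ahat : Matrix (Fin m) (Fin n) ℝ) : Prop :=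
  Ahat.rank ≤ r ∧ ∀ M : Matrix (Fin m) (Fin n) ℝ, M.rank ≤ r →
    schattenR 2 (B - Ahat) ≤ schattenR 2 (B - M)

namespace PER

variable {m n N : ℕ} {κ : Type*}

def OrthoFam {N : ℕ} {κ : Type*} (f : κ → (Fin N → ℝ)) : Prop :=
  (∀ i, f i ⬝ᵥ f i = 1) ∧ ∀ i j, i ≠ j → f i ⬝ᵥ f j = 0

lemma dot_sum_right (x : Fin N → ℝ) (s : Finset κ) (g : κ → Fin N → ℝ) :
    x ⬝ᵥ (∑ p ∈ s, g p) = ∑ p ∈ s, x ⬝ᵥ g p := by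
  simp only [dotProduct, Finset.sum_apply, Finset.mul_sum]
  exact Finset.sum_comm

lemma dot_sum_left (x : Fin N → ℝ) (s : Finset κ) (g : κ → Fin N → ℝ) :
    (∑ p ∈ s, g p) ⬝ᵥ x = ∑ p ∈ s, g p ⬝ᵥ x := by
  simp only [dotProduct, Finset.sum_apply, Finset.sum_mul]
  exact Finset.sum_comm

variable [Fintype κ]

lemma OrthoFam.dot_sums {f : κ → (Fin N → ℝ)} (hf : OrthoFam f) (a b : κ → ℝ) :
    (∑ p, a p • f p) ⬝ᵥ (∑ q, b q • f q) = ∑ p, a p * b p := by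
  rw [dot_sum_left]
  have : ∀ p, (a p • f p) ⬝ᵥ (∑ q, b q • f q) = a p * b p := by
    intro p
    rw [dot_sum_right]
    have : ∀ q, (a p • f p) ⬝ᵥ (b q • f q) = a p * b q * (f p ⬝ᵥ f q) := by
      intro q
      rw [smul_dotProduct, dotProduct_smul, smul_eq_mul, smul_eq_mul]; ring
    rw [Finset.sum_congr rfl (fun q _ => this q)]
    rw [Finset.sum_eq_single p]
    · rw [hf.1 p]; ring
    · intro q _ hq; rw [hf.2 p q (Ne.symm hq), mul_zero]
    · intro h; exact absurd (Finset.mem_univ p) h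
  rw [Finset.sum_congr rfl (fun p _ => this p)]

lemma OrthoFam.dot_self_sum {f : κ → (Fin N → ℝ)} (hf : OrthoFam f) (a : κ → ℝ) :
    (∑ p, a p • f p) ⬝ᵥ (∑ q, a q • f q) = ∑ p, a p ^ 2 := by
  rw [hf.dot_sums]; simp [pow_two]

lemma span_dot_zero {κ : Type*} {f : κ → (Fin N → ℝ)} {y : Fin N → ℝ} (h : ∀ p, f p ⬝ᵥ y = 0) :
    ∀ x ∈ Submodule.span ℝ (Set.range f), x ⬝ᵥ y = 0 := by
  intro x hx
  induction hx using Submodule.span_induction with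
  | mem z hz => obtain ⟨p, rfl⟩ := hz; exact h p
  | zero => simp
  | add a b _ _ ha hb => rw [add_dotProduct, ha, hb, add_zero]
  | smul c a _ ha => rw [smul_dotProduct, ha, smul_zero]

lemma sum_smul_dot {f : κ → (Fin N → ℝ)} (hf : OrthoFam f) (a : κ → ℝ) (p : κ) :
    (∑ q, a q • f q) ⬝ᵥ f p = a p := by
  rw [dot_sum_left, Finset.sum_eq_single p]
  · rw [smul_dotProduct, hf.1 p, smul_eq_mul, mul_one]
  · intro q _ hq; rw [smul_dotProduct, hf.2 q p hq, smul_zero]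
  · intro h; exact absurd (Finset.mem_univ p) h

lemma OrthoFam.linearIndependent {f : κ → (Fin N → ℝ)} (hf : OrthoFam f) :
    LinearIndependent ℝ f := by
  rw [Fintype.linearIndependent_iff]
  intro a ha p
  have := sum_smul_dot hf a p
  rw [ha, zero_dotProduct] at this
  exact this.symm

lemma OrthoFam.repr {f : κ → (Fin N → ℝ)} (_hf : OrthoFam f) {x : Fin N → ℝ}
    (hx : x ∈ Submodule.span ℝ (Set.range f)) : ∃ a : κ → ℝ, x = ∑ p, a p • f p := by
  rw [Submodule.mem_span_range_iff_exists_fun] at hx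
  obtain ⟨a, ha⟩ := hx
  exact ⟨a, ha.symm⟩

lemma OrthoFam.finrank_span {f : κ → (Fin N → ℝ)} (hf : OrthoFam f) :
    Module.finrank ℝ (Submodule.span ℝ (Set.range f)) = Fintype.card κ :=
  finrank_span_eq_card hf.linearIndependent

lemma OrthoFam.card_le {f : κ → (Fin N → ℝ)} (hf : OrthoFam f) : Fintype.card κ ≤ N := by
  have := hf.linearIndependent.fintype_card_le_finrank
  simpa using this



variable {m n r k : ℕ}


lemma dot_nonneg (x : Fin n → ℝ) : 0 ≤ x ⬝ᵥ x :=
  Finset.sum_nonneg fun i _ => mul_self_nonneg _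

lemma dot_cs (x y : Fin n → ℝ) : x ⬝ᵥ y ≤ Real.sqrt (x ⬝ᵥ x) * Real.sqrt (y ⬝ᵥ y) := by
  have h := Finset.sum_mul_sq_le_sq_mul_sq Finset.univ x y
  have h2 : x ⬝ᵥ y ≤ |x ⬝ᵥ y| := le_abs_self _
  refine h2.trans ?_
  rw [← Real.sqrt_sq_eq_abs, ← Real.sqrt_mul (dot_nonneg x)]
  apply Real.sqrt_le_sqrt
  simpa [dotProduct, pow_two] using h

/-- `x ⬝ᵥ ((Mᵀ*M) *ᵥ x) = (M*ᵥx) ⬝ᵥ (M*ᵥx)` -/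
lemma dot_MtM (M : Matrix (Fin m) (Fin n) ℝ) (x : Fin n → ℝ) :
    x ⬝ᵥ ((Mᵀ * M) *ᵥ x) = (M *ᵥ x) ⬝ᵥ (M *ᵥ x) := by
  rw [← Matrix.mulVec_mulVec, Matrix.dotProduct_mulVec, Matrix.vecMul_transpose]

lemma dot_sym (N : Matrix (Fin n) (Fin n) ℝ) (hN : Nᵀ = N) (x y : Fin n → ℝ) :
    x ⬝ᵥ (N *ᵥ y) = (N *ᵥ x) ⬝ᵥ y := by
  rw [Matrix.dotProduct_mulVec, ← Matrix.vecMul_transpose, hN]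

lemma transpose_MtM (M : Matrix (Fin m) (Fin n) ℝ) : (Mᵀ * M)ᵀ = Mᵀ * M := by
  rw [Matrix.transpose_mul, Matrix.transpose_transpose]


variable {m n : ℕ}

abbrev hermOf (M : Matrix (Fin m) (Fin n) ℝ) : (Mᴴ * M).IsHermitian :=
  Matrix.isHermitian_conjTranspose_mul_self M

lemma real_conjTranspose_eq (M : Matrix (Fin m) (Fin n) ℝ) : Mᴴ = Mᵀ := by
  ext i j; simp [Matrix.conjTranspose_apply]

noncomputable def sIdx (M : Matrix (Fin m) (Fin n) ℝ) {i : ℕ} (hi : i < n) : Fin n :=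
  Tuple.sort ((hermOf M).eigenvalues) ⟨n - 1 - i, by omega⟩

lemma sval_eq (M : Matrix (Fin m) (Fin n) ℝ) {i : ℕ} (hi : i < n) :
    sval M i = Real.sqrt ((hermOf M).eigenvalues (sIdx M hi)) := dif_pos hi

lemma sval_of_le (M : Matrix (Fin m) (Fin n) ℝ) {i : ℕ} (hi : n ≤ i) : sval M i = 0 :=
  dif_neg (by omega)

lemma sval_nonneg (M : Matrix (Fin m) (Fin n) ℝ) (i : ℕ) : 0 ≤ sval M i := by
  unfold sval; split
  · exact Real.sqrt_nonneg _
  · exact le_refl 0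

lemma eig_nonneg (M : Matrix (Fin m) (Fin n) ℝ) (j : Fin n) : 0 ≤ (hermOf M).eigenvalues j :=
  (Matrix.posSemidef_conjTranspose_mul_self M).eigenvalues_nonneg j

lemma sval_sq (M : Matrix (Fin m) (Fin n) ℝ) {i : ℕ} (hi : i < n) :
    sval M i ^ 2 = (hermOf M).eigenvalues (sIdx M hi) := by
  rw [sval_eq M hi, Real.sq_sqrt (eig_nonneg M _)]

lemma sval_antitone (M : Matrix (Fin m) (Fin n) ℝ) {i j : ℕ} (hij : i ≤ j) :
    sval M j ≤ sval M i := by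
  by_cases hj : j < n
  · have hi : i < n := lt_of_le_of_lt hij hj
    rw [sval_eq M hi, sval_eq M hj]
    apply Real.sqrt_le_sqrt
    have := Tuple.monotone_sort ((hermOf M).eigenvalues)
      (a := (⟨n - 1 - j, by omega⟩ : Fin n)) (b := ⟨n - 1 - i, by omega⟩) (by simp [Fin.le_def]; omega)
    exact this
  · rw [sval_of_le M (by omega)]; exact sval_nonneg M i

lemma sval_sq_antitone (M : Matrix (Fin m) (Fin n) ℝ) {i j : ℕ} (hij : i ≤ j) :
    sval M j ^ 2 ≤ sval M i ^ 2 :=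
  pow_le_pow_left₀ (sval_nonneg M j) (sval_antitone M hij) 2

/-- descending eigenvector family -/
noncomputable def rsv (M : Matrix (Fin m) (Fin n) ℝ) {i : ℕ} (hi : i < n) : Fin n → ℝ :=
  ((hermOf M).eigenvectorBasis (sIdx M hi))

lemma rsv_eig (M : Matrix (Fin m) (Fin n) ℝ) {i : ℕ} (hi : i < n) :
    (Mᵀ * M) *ᵥ rsv M hi = (sval M i ^ 2) • rsv M hi := by
  rw [← real_conjTranspose_eq, sval_sq M hi]
  exact (hermOf M).mulVec_eigenvectorBasis (sIdx M hi)

lemma euclid_inner_eq_dot (x y : EuclideanSpace ℝ (Fin n)) :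
    (inner ℝ x y : ℝ) = (x : Fin n → ℝ) ⬝ᵥ (y : Fin n → ℝ) := by
  simp [PiLp.inner_apply, RCLike.inner_apply, dotProduct, mul_comm]

lemma rsv_dot (M : Matrix (Fin m) (Fin n) ℝ) {i j : ℕ} (hi : i < n) (hj : j < n) :
    rsv M hi ⬝ᵥ rsv M hj = if i = j then 1 else 0 := by
  have horth := (hermOf M).eigenvectorBasis.orthonormal
  rw [orthonormal_iff_ite] at horth
  have := horth (sIdx M hi) (sIdx M hj)
  rw [euclid_inner_eq_dot] at this
  unfold rsv
  rw [this]
  congr 1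
  simp only [eq_iff_iff]
  constructor
  · intro h
    have h2 := (Tuple.sort ((hermOf M).eigenvalues)).injective h
    have : n - 1 - i = n - 1 - j := congrArg Fin.val h2
    omega
  · intro h; subst h; rfl

lemma sIdx_inj (M : Matrix (Fin m) (Fin n) ℝ) {i j : ℕ} (hi : i < n) (hj : j < n)
    (h : sIdx M hi = sIdx M hj) : i = j := by
  have h2 := (Tuple.sort ((hermOf M).eigenvalues)).injective h
  have : n - 1 - i = n - 1 - j := congrArg Fin.val h2
  omega


end PER
section C4
namespace PER
variable {m n : ℕ}
open Module Submodule

lemma finrank_pi_n : Module.finrank ℝ (Fin n → ℝ) = n := by simp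

lemma exists_nonzero_inf (S T : Submodule ℝ (Fin n → ℝ))
    (h : n + 1 ≤ Module.finrank ℝ S + Module.finrank ℝ T) :
    ∃ x, x ∈ S ∧ x ∈ T ∧ x ≠ 0 := by
  have h1 := Submodule.finrank_sup_add_finrank_inf_eq S T
  have h2 : Module.finrank ℝ ↥(S ⊔ T) ≤ n := by
    have := Submodule.finrank_le (S ⊔ T)
    rwa [finrank_pi_n] at this
  have h3 : S ⊓ T ≠ ⊥ := by
    intro hb
    rw [hb, finrank_bot] at h1
    omega
  obtain ⟨x, hx, hx0⟩ := Submodule.exists_mem_ne_zero_of_ne_bot h3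
  exact ⟨x, hx.1, hx.2, hx0⟩

lemma eig_quad {κ : Type*} [Fintype κ] (H : Matrix (Fin n) (Fin n) ℝ) {f : κ → Fin n → ℝ}
    (hf : OrthoFam f) (lam : κ → ℝ) (heig : ∀ p, H *ᵥ f p = lam p • f p) (a : κ → ℝ) :
    (∑ p, a p • f p) ⬝ᵥ (H *ᵥ (∑ p, a p • f p)) = ∑ p, lam p * a p ^ 2 := by
  have hH : H *ᵥ (∑ p, a p • f p) = ∑ p, (a p * lam p) • f p := by
    have h0 : H.mulVecLin (∑ p, a p • f p) = ∑ p, H.mulVecLin (a p • f p) :=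
      map_sum _ _ _
    simp only [Matrix.mulVecLin_apply] at h0
    rw [h0]
    apply Finset.sum_congr rfl
    intro p _
    rw [Matrix.mulVec_smul, heig p, smul_smul]
  rw [hH, hf.dot_sums]
  apply Finset.sum_congr rfl
  intro p _; ring

lemma exists_coeff_ne_zero {κ : Type*} [Fintype κ] {f : κ → Fin n → ℝ} {a : κ → ℝ}
    {x : Fin n → ℝ} (ha : x = ∑ p, a p • f p) (hx : x ≠ 0) : ∃ q, a q ≠ 0 := by
  by_contra hall
  push_neg at hall
  apply hx
  rw [ha]
  apply Finset.sum_eq_zero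
  intro p _
  rw [hall p, zero_smul]

lemma dot_self_pos {x : Fin n → ℝ} (hx : x ≠ 0) : 0 < x ⬝ᵥ x :=
  lt_of_le_of_ne (dot_nonneg x) (fun h => hx (dotProduct_self_eq_zero.mp h.symm))

/-- Courant–Fischer style upper bound for singular values. -/
lemma sval_le {M : Matrix (Fin m) (Fin n) ℝ} {i : ℕ} {c : ℝ} (hc : 0 ≤ c)
    (S : Submodule ℝ (Fin n → ℝ)) (hdim : n ≤ Module.finrank ℝ S + i)
    (hq : ∀ x ∈ S, (M *ᵥ x) ⬝ᵥ (M *ᵥ x) ≤ c ^ 2 * (x ⬝ᵥ x)) : sval M i ≤ c := by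
  rcases le_or_gt n i with h | h
  · rw [sval_of_le M h]; exact hc
  set g : Fin (i+1) → (Fin n → ℝ) := fun t => rsv M (show (t : ℕ) < n by omega) with hgdef
  have hg : OrthoFam g := by
    constructor
    · intro p
      have := rsv_dot M (show (p : ℕ) < n by omega) (show (p : ℕ) < n by omega)
      simpa using this
    · intro p q hpq
      have := rsv_dot M (show (p : ℕ) < n by omega) (show (q : ℕ) < n by omega)
      rw [if_neg (by simpa [Fin.ext_iff] using hpq)] at this
      exact this
  obtain ⟨x, hxS, hxT, hx0⟩ := exists_nonzero_inf S (Submodule.span ℝ (Set.range g)) (by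
    rw [hg.finrank_span, Fintype.card_fin]; omega)
  obtain ⟨a, ha⟩ := hg.repr hxT
  have hquad : (M *ᵥ x) ⬝ᵥ (M *ᵥ x) = ∑ p : Fin (i+1), (sval M (p : ℕ) ^ 2) * a p ^ 2 := by
    rw [← dot_MtM, ha]
    exact eig_quad (Mᵀ * M) hg _ (fun p => rsv_eig M _) a
  have hxx : x ⬝ᵥ x = ∑ p, a p ^ 2 := by rw [ha, hg.dot_self_sum]
  have hlow : sval M i ^ 2 * (x ⬝ᵥ x) ≤ (M *ᵥ x) ⬝ᵥ (M *ᵥ x) := by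
    rw [hquad, hxx, Finset.mul_sum]
    apply Finset.sum_le_sum
    intro p _
    exact mul_le_mul_of_nonneg_right (sval_sq_antitone M (by omega)) (sq_nonneg _)
  have hup := hq x hxS
  have hpos := dot_self_pos hx0
  have : sval M i ^ 2 ≤ c ^ 2 := le_of_mul_le_mul_right (hlow.trans hup) hpos
  calc sval M i = Real.sqrt (sval M i ^ 2) := (Real.sqrt_sq (sval_nonneg M i)).symm
    _ ≤ Real.sqrt (c ^ 2) := Real.sqrt_le_sqrt this
    _ = c := Real.sqrt_sq hc

/-- if an orthonormal family of `MᵀM`-eigenvectors has all eigenvalues `> τ`,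
then `sval M (t-1) ^ 2 > τ` where `t` is the family's size. -/
lemma sval_sq_gt {M : Matrix (Fin m) (Fin n) ℝ} {κ : Type*} [Fintype κ] {f : κ → Fin n → ℝ}
    (hf : OrthoFam f) (lam : κ → ℝ) (heig : ∀ p, (Mᵀ * M) *ᵥ f p = lam p • f p) {τ : ℝ}
    (hτ : ∀ p, τ < lam p) {t : ℕ} (hcard : Fintype.card κ = t) (ht : 0 < t) :
    τ < sval M (t - 1) ^ 2 := by
  have htn : t ≤ n := by
    have := hf.card_le; omega
  by_contra hle
  push_neg at hle
  set gB : Fin (n - t + 1) → (Fin n → ℝ) :=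
    fun j => rsv M (show (t - 1) + (j : ℕ) < n by omega) with hgBdef
  have hgB : OrthoFam gB := by
    constructor
    · intro p; simpa using rsv_dot M (show (t-1) + (p : ℕ) < n by omega) (show (t-1) + (p:ℕ) < n by omega)
    · intro p q hpq
      have := rsv_dot M (show (t-1) + (p : ℕ) < n by omega) (show (t-1) + (q:ℕ) < n by omega)
      rw [if_neg (by simpa [Fin.ext_iff] using hpq)] at this
      exact this
  obtain ⟨x, hxT, hxB, hx0⟩ := exists_nonzero_inf (Submodule.span ℝ (Set.range f))
    (Submodule.span ℝ (Set.range gB)) (by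
      rw [hf.finrank_span, hgB.finrank_span, Fintype.card_fin, hcard]; omega)
  obtain ⟨a, ha⟩ := hf.repr hxT
  obtain ⟨b, hb⟩ := hgB.repr hxB
  have hup : x ⬝ᵥ ((Mᵀ * M) *ᵥ x) ≤ τ * (x ⬝ᵥ x) := by
    rw [hb, eig_quad (Mᵀ * M) hgB _ (fun p => rsv_eig M _) b, hgB.dot_self_sum,
      Finset.mul_sum]
    apply Finset.sum_le_sum
    intro p _
    have h1 : sval M ((t-1) + (p : ℕ)) ^ 2 ≤ τ :=
      le_trans (sval_sq_antitone M (Nat.le_add_right _ _)) hle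
    exact mul_le_mul_of_nonneg_right h1 (sq_nonneg _)
  have hdown : τ * (x ⬝ᵥ x) < x ⬝ᵥ ((Mᵀ * M) *ᵥ x) := by
    rw [ha, eig_quad (Mᵀ * M) hf lam heig a, hf.dot_self_sum, Finset.mul_sum]
    obtain ⟨q, hq⟩ := exists_coeff_ne_zero ha hx0
    apply Finset.sum_lt_sum
    · intro p _
      exact mul_le_mul_of_nonneg_right (le_of_lt (hτ p)) (sq_nonneg _)
    · exact ⟨q, Finset.mem_univ q,
        mul_lt_mul_of_pos_right (hτ q) (by positivity)⟩
  exact absurd (lt_of_lt_of_le hdown hup) (lt_irrefl _)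

end PER
end C4
section C5
namespace PER
variable {m n : ℕ}

lemma exists_bot_space (M : Matrix (Fin m) (Fin n) ℝ) (i : ℕ) :
    ∃ S : Submodule ℝ (Fin n → ℝ), Module.finrank ℝ S = n - i ∧
      ∀ x ∈ S, (M *ᵥ x) ⬝ᵥ (M *ᵥ x) ≤ sval M i ^ 2 * (x ⬝ᵥ x) := by
  rcases le_or_gt n i with h | h
  · refine ⟨⊥, by simp [Nat.sub_eq_zero_of_le h], ?_⟩
    intro x hx
    rw [Submodule.mem_bot] at hx
    subst hx
    simp [Matrix.mulVec_zero]
  · set gB : Fin (n - i) → (Fin n → ℝ) :=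
      fun j => rsv M (show i + (j : ℕ) < n by omega) with hgBdef
    have hgB : OrthoFam gB := by
      constructor
      · intro p; simpa using rsv_dot M (show i + (p : ℕ) < n by omega) (show i + (p:ℕ) < n by omega)
      · intro p q hpq
        have := rsv_dot M (show i + (p : ℕ) < n by omega) (show i + (q:ℕ) < n by omega)
        rw [if_neg (by simpa [Fin.ext_iff] using hpq)] at this
        exact this
    refine ⟨Submodule.span ℝ (Set.range gB), by rw [hgB.finrank_span, Fintype.card_fin], ?_⟩
    intro x hx
    obtain ⟨b, hb⟩ := hgB.repr hx
    rw [← dot_MtM, hb, eig_quad (Mᵀ * M) hgB _ (fun p => rsv_eig M _) b, hgB.dot_self_sum,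
      Finset.mul_sum]
    apply Finset.sum_le_sum
    intro p _
    exact mul_le_mul_of_nonneg_right (sval_sq_antitone M (Nat.le_add_right _ _)) (sq_nonneg _)

lemma weyl (X Y : Matrix (Fin m) (Fin n) ℝ) (i j : ℕ) :
    sval (X + Y) (i + j) ≤ sval X i + sval Y j := by
  rcases le_or_gt n (i + j) with h | h
  · rw [sval_of_le _ h]
    exact add_nonneg (sval_nonneg X i) (sval_nonneg Y j)
  obtain ⟨SX, hSXdim, hSXq⟩ := exists_bot_space X i
  obtain ⟨SY, hSYdim, hSYq⟩ := exists_bot_space Y j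
  set cX := sval X i
  set cY := sval Y j
  have hcX : 0 ≤ cX := sval_nonneg X i
  have hcY : 0 ≤ cY := sval_nonneg Y j
  apply sval_le (add_nonneg hcX hcY) (SX ⊓ SY)
  · have h1 := Submodule.finrank_sup_add_finrank_inf_eq SX SY
    have h2 : Module.finrank ℝ ↥(SX ⊔ SY) ≤ n := by
      have := Submodule.finrank_le (SX ⊔ SY)
      rwa [finrank_pi_n] at this
    omega
  · rintro x ⟨hxX, hxY⟩
    rw [Matrix.add_mulVec]
    set u := X *ᵥ x
    set v := Y *ᵥ x
    have hu := hSXq x hxX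
    have hv := hSYq x hxY
    have huv : u ⬝ᵥ v ≤ cX * cY * (x ⬝ᵥ x) := by
      calc u ⬝ᵥ v ≤ Real.sqrt (u ⬝ᵥ u) * Real.sqrt (v ⬝ᵥ v) := dot_cs u v
        _ ≤ Real.sqrt (cX ^ 2 * (x ⬝ᵥ x)) * Real.sqrt (cY ^ 2 * (x ⬝ᵥ x)) := by
            apply mul_le_mul (Real.sqrt_le_sqrt hu) (Real.sqrt_le_sqrt hv)
              (Real.sqrt_nonneg _) (Real.sqrt_nonneg _)
        _ = cX * cY * (x ⬝ᵥ x) := by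
            rw [Real.sqrt_mul (sq_nonneg cX), Real.sqrt_mul (sq_nonneg cY),
              Real.sqrt_sq hcX, Real.sqrt_sq hcY]
            calc cX * Real.sqrt (x ⬝ᵥ x) * (cY * Real.sqrt (x ⬝ᵥ x))
                = cX * cY * (Real.sqrt (x ⬝ᵥ x) * Real.sqrt (x ⬝ᵥ x)) := by ring
              _ = cX * cY * (x ⬝ᵥ x) := by rw [Real.mul_self_sqrt (dot_nonneg x)]
    have hexp : (u + v) ⬝ᵥ (u + v) = u ⬝ᵥ u + 2 * (u ⬝ᵥ v) + v ⬝ᵥ v := by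
      rw [add_dotProduct, dotProduct_add, dotProduct_add,
        dotProduct_comm v u]
      ring
    rw [hexp]
    nlinarith [dot_nonneg x]

lemma sval_zero_of_rank (M : Matrix (Fin m) (Fin n) ℝ) {i : ℕ} (hi : M.rank ≤ i) :
    sval M i = 0 := by
  refine le_antisymm ?_ (sval_nonneg M i)
  apply sval_le le_rfl (LinearMap.ker M.mulVecLin)
  · have h1 := LinearMap.finrank_range_add_finrank_ker M.mulVecLin
    rw [finrank_pi_n] at h1
    have h2 : M.rank = Module.finrank ℝ (LinearMap.range M.mulVecLin) := rfl
    omega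
  · intro x hx
    rw [LinearMap.mem_ker, Matrix.mulVecLin_apply] at hx
    rw [hx]
    simp

end PER
end C5
section C6
namespace PER
variable {m n N : ℕ}

lemma bessel {κ : Type*} [Fintype κ] {u : κ → Fin N → ℝ} (hu : OrthoFam u) (a : Fin N → ℝ) :
    ∑ p, (u p ⬝ᵥ a) ^ 2 ≤ a ⬝ᵥ a := by
  set c := fun p => u p ⬝ᵥ a with hc
  set S := ∑ p, c p • u p with hS
  have h0 : 0 ≤ (a - S) ⬝ᵥ (a - S) := dot_nonneg _
  have hSS : S ⬝ᵥ S = ∑ p, c p ^ 2 := hu.dot_self_sum c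
  have hSa : S ⬝ᵥ a = ∑ p, c p ^ 2 := by
    rw [hS, dot_sum_left]
    apply Finset.sum_congr rfl
    intro p _
    rw [smul_dotProduct]
    show c p • c p = c p ^ 2
    simp [pow_two]
  have haS : a ⬝ᵥ S = ∑ p, c p ^ 2 := by rw [dotProduct_comm, hSa]
  have hexp : (a - S) ⬝ᵥ (a - S) = a ⬝ᵥ a - a ⬝ᵥ S - S ⬝ᵥ a + S ⬝ᵥ S := by
    rw [sub_dotProduct, dotProduct_sub, dotProduct_sub]
    ring
  rw [hexp, hSa, haS, hSS] at h0
  linarith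

lemma abel_aux (s x y : ℕ → ℝ) (hs_anti : ∀ a b : ℕ, a ≤ b → s b ≤ s a)
    (hs0 : ∀ j, 0 ≤ s j) (hD : ∀ l, 0 ≤ ∑ j ∈ Finset.range l, (y j - x j)) (N : ℕ) :
    s N * ∑ j ∈ Finset.range N, (y j - x j) ≤ ∑ j ∈ Finset.range N, s j * (y j - x j) := by
  induction N with
  | zero => simp
  | succ N ih =>
    have h1 : s (N + 1) * ∑ j ∈ Finset.range (N+1), (y j - x j)
        ≤ s N * ∑ j ∈ Finset.range (N+1), (y j - x j) :=
      mul_le_mul_of_nonneg_right (hs_anti N (N+1) (Nat.le_succ N)) (hD (N+1))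
    rw [Finset.sum_range_succ (f := fun j => y j - x j)] at h1 ⊢
    rw [Finset.sum_range_succ]
    calc s (N+1) * (∑ j ∈ Finset.range N, (y j - x j) + (y N - x N))
        ≤ s N * (∑ j ∈ Finset.range N, (y j - x j) + (y N - x N)) := h1
      _ = s N * ∑ j ∈ Finset.range N, (y j - x j) + s N * (y N - x N) := by ring
      _ ≤ ∑ j ∈ Finset.range N, s j * (y j - x j) + s N * (y N - x N) := by linarith [ih]

lemma abel_compare (s x y : ℕ → ℝ) (hs_anti : ∀ a b : ℕ, a ≤ b → s b ≤ s a)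
    (hs0 : ∀ j, 0 ≤ s j) (hD : ∀ l, 0 ≤ ∑ j ∈ Finset.range l, (y j - x j)) (N : ℕ) :
    ∑ j ∈ Finset.range N, s j * x j ≤ ∑ j ∈ Finset.range N, s j * y j := by
  have h1 := abel_aux s x y hs_anti hs0 hD N
  have h2 : 0 ≤ s N * ∑ j ∈ Finset.range N, (y j - x j) :=
    mul_nonneg (hs0 N) (hD N)
  have h3 : ∑ j ∈ Finset.range N, s j * (y j - x j)
      = ∑ j ∈ Finset.range N, s j * y j - ∑ j ∈ Finset.range N, s j * x j := by
    rw [← Finset.sum_sub_distrib]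
    apply Finset.sum_congr rfl
    intro j _; ring
  rw [h3] at h1
  linarith

lemma ortho_expand {f : Fin n → Fin n → ℝ} (hf : OrthoFam f) (x : Fin n → ℝ) :
    x = ∑ j, (f j ⬝ᵥ x) • f j := by
  have hsp : Submodule.span ℝ (Set.range f) = ⊤ := by
    apply Submodule.eq_top_of_finrank_eq
    rw [hf.finrank_span, Fintype.card_fin, finrank_pi_n]
  obtain ⟨a, ha⟩ := hf.repr (by rw [hsp]; exact Submodule.mem_top : x ∈ _)
  have hcoef : ∀ j, f j ⬝ᵥ x = a j := by
    intro j
    rw [dotProduct_comm, ha, sum_smul_dot hf]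
  conv_lhs => rw [ha]
  apply Finset.sum_congr rfl
  intro j _
  rw [hcoef j]

/-- left singular vectors (zero when the singular value vanishes). -/
noncomputable def lsv (M : Matrix (Fin m) (Fin n) ℝ) (j : Fin n) : Fin m → ℝ :=
  (sval M (j : ℕ))⁻¹ • (M *ᵥ rsv M j.isLt)

lemma dot_MtM2 (M : Matrix (Fin m) (Fin n) ℝ) (x y : Fin n → ℝ) :
    x ⬝ᵥ ((Mᵀ * M) *ᵥ y) = (M *ᵥ x) ⬝ᵥ (M *ᵥ y) := by
  rw [← Matrix.mulVec_mulVec, Matrix.dotProduct_mulVec, Matrix.vecMul_transpose]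

lemma Mrsv_dot (M : Matrix (Fin m) (Fin n) ℝ) (j k : Fin n) :
    (M *ᵥ rsv M j.isLt) ⬝ᵥ (M *ᵥ rsv M k.isLt)
      = sval M (k : ℕ) ^ 2 * (if (j : ℕ) = (k : ℕ) then 1 else 0) := by
  rw [← dot_MtM2, rsv_eig M k.isLt, dotProduct_smul, smul_eq_mul,
    rsv_dot M j.isLt k.isLt]

lemma M_rsv_eq (M : Matrix (Fin m) (Fin n) ℝ) (j : Fin n) :
    M *ᵥ rsv M j.isLt = sval M (j : ℕ) • lsv M j := by
  rcases eq_or_ne (sval M (j : ℕ)) 0 with h | h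
  · have h2 : (M *ᵥ rsv M j.isLt) ⬝ᵥ (M *ᵥ rsv M j.isLt) = 0 := by
      rw [Mrsv_dot M j j, h]; simp
    rw [dotProduct_self_eq_zero] at h2
    rw [h2, h, zero_smul]
  · rw [lsv, smul_smul, mul_inv_cancel₀ h, one_smul]

lemma lsv_dot_ne (M : Matrix (Fin m) (Fin n) ℝ) {j k : Fin n} (hjk : j ≠ k) :
    lsv M j ⬝ᵥ lsv M k = 0 := by
  rw [lsv, lsv, smul_dotProduct, dotProduct_smul, Mrsv_dot M j k,
    if_neg (by simpa [Fin.ext_iff] using hjk)]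
  simp

lemma lsv_dot_self (M : Matrix (Fin m) (Fin n) ℝ) (j : Fin n) :
    lsv M j ⬝ᵥ lsv M j = if sval M (j : ℕ) = 0 then 0 else 1 := by
  rw [lsv, smul_dotProduct, dotProduct_smul, Mrsv_dot M j j, if_pos rfl]
  rcases eq_or_ne (sval M (j : ℕ)) 0 with h | h
  · rw [if_pos h, h]; simp
  · rw [if_neg h]
    field_simp
    ring_nf; rw [← mul_pow, mul_inv_cancel₀ h, one_pow]

lemma lsv_dot_self_le (M : Matrix (Fin m) (Fin n) ℝ) (j : Fin n) :
    lsv M j ⬝ᵥ lsv M j ≤ 1 := by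
  rw [lsv_dot_self]; split <;> norm_num

end PER
end C6
section C7
namespace PER
variable {m n : ℕ}

lemma subortho_dot_le {ι : Type*} [Fintype ι] {M' : ℕ} (g : ι → Fin M' → ℝ)
    (hg0 : ∀ t t', t ≠ t' → g t ⬝ᵥ g t' = 0) (hg1 : ∀ t, g t ⬝ᵥ g t ≤ 1) (γ : ι → ℝ) :
    (∑ t, γ t • g t) ⬝ᵥ (∑ t, γ t • g t) ≤ ∑ t, γ t ^ 2 := by
  rw [dot_sum_left]
  have hterm : ∀ t, (γ t • g t) ⬝ᵥ (∑ t', γ t' • g t') = γ t ^ 2 * (g t ⬝ᵥ g t) := by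
    intro t
    rw [dot_sum_right, Finset.sum_eq_single t]
    · rw [smul_dotProduct, dotProduct_smul]
      simp only [smul_eq_mul]
      ring
    · intro t' _ ht'
      rw [smul_dotProduct, dotProduct_smul, hg0 t t' (Ne.symm ht')]
      simp
    · intro h; exact absurd (Finset.mem_univ t) h
  rw [Finset.sum_congr rfl (fun t _ => hterm t)]
  apply Finset.sum_le_sum
  intro t _
  calc γ t ^ 2 * (g t ⬝ᵥ g t) ≤ γ t ^ 2 * 1 := mul_le_mul_of_nonneg_left (hg1 t) (sq_nonneg _)
    _ = γ t ^ 2 := mul_one _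

lemma range_filter_lt (l k : ℕ) : (Finset.range l).filter (· < k) = Finset.range (min l k) := by
  ext j
  simp [Nat.lt_min]

/-- **Trace bound**: for orthonormal families `u`, `x` indexed by `κ`,
`∑ ⟨u p, M x p⟩ ≤ ∑_{j<card κ} σ_j(M)`. -/
lemma trace_bound {κ : Type*} [Fintype κ] (M : Matrix (Fin m) (Fin n) ℝ)
    {u : κ → Fin m → ℝ} {x : κ → Fin n → ℝ} (hu : OrthoFam u) (hx : OrthoFam x) :
    ∑ p, u p ⬝ᵥ (M *ᵥ x p) ≤ ∑ j ∈ Finset.range (Fintype.card κ), sval M j := by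
  classical
  set k := Fintype.card κ with hk
  set b : Fin n → Fin n → ℝ := fun j => rsv M j.isLt with hb
  have hbo : OrthoFam b := by
    constructor
    · intro j; simpa using rsv_dot M j.isLt j.isLt
    · intro j j' hjj'
      have := rsv_dot M j.isLt j'.isLt
      rw [if_neg (by simpa [Fin.ext_iff] using hjj')] at this
      exact this
  set β : κ → Fin n → ℝ := fun p j => b j ⬝ᵥ x p with hβ
  have hβb : ∀ p, ∑ j, β p j ^ 2 ≤ 1 := by
    intro p
    have h1 := bessel hbo (x p)
    rw [hx.1 p] at h1
    exact h1
  have hMx : ∀ p, M *ᵥ x p = ∑ j, (β p j * sval M (j : ℕ)) • lsv M j := by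
    intro p
    conv_lhs => rw [ortho_expand hbo (x p)]
    have h0 : M.mulVecLin (∑ j, (b j ⬝ᵥ x p) • b j) = ∑ j, M.mulVecLin ((b j ⬝ᵥ x p) • b j) :=
      map_sum _ _ _
    simp only [Matrix.mulVecLin_apply] at h0
    rw [h0]
    apply Finset.sum_congr rfl
    intro j _
    rw [Matrix.mulVec_smul]
    show (β p j) • (M *ᵥ rsv M j.isLt) = _
    rw [M_rsv_eq M j, smul_smul]
  set c : ℕ → ℝ := fun j => if h : j < n then ∑ p, (u p ⬝ᵥ lsv M ⟨j, h⟩) * β p ⟨j, h⟩ else 0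
    with hc
  have hstep2 : ∑ p, u p ⬝ᵥ (M *ᵥ x p) = ∑ j ∈ Finset.range n, sval M j * c j := by
    rw [← Fin.sum_univ_eq_sum_range (fun j => sval M j * c j) n]
    have h1 : ∀ p, u p ⬝ᵥ (M *ᵥ x p)
        = ∑ j : Fin n, (β p j * sval M (j : ℕ)) * (u p ⬝ᵥ lsv M j) := by
      intro p
      rw [hMx p, dot_sum_right]
      apply Finset.sum_congr rfl
      intro j _
      rw [dotProduct_smul, smul_eq_mul]
    rw [Finset.sum_congr rfl (fun p _ => h1 p), Finset.sum_comm]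
    apply Finset.sum_congr rfl
    intro j _
    rw [hc]
    simp only [dif_pos j.isLt, Fin.eta]
    rw [Finset.mul_sum]
    apply Finset.sum_congr rfl
    intro p _
    ring
  have hc_le_one : ∀ j, c j ≤ 1 := by
    intro j
    rw [hc]
    dsimp only
    split
    case isFalse => norm_num
    case isTrue h =>
      have hcs := Finset.sum_mul_sq_le_sq_mul_sq Finset.univ
        (fun p => u p ⬝ᵥ lsv M ⟨j, h⟩) (fun p => β p ⟨j, h⟩)
      have h1 : ∑ p, (u p ⬝ᵥ lsv M ⟨j, h⟩) ^ 2 ≤ 1 :=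
        le_trans (bessel hu (lsv M ⟨j, h⟩)) (lsv_dot_self_le M ⟨j, h⟩)
      have h2 : ∑ p, (β p ⟨j, h⟩) ^ 2 ≤ 1 := by
        have h3 := bessel hx (b ⟨j, h⟩)
        rw [hbo.1 ⟨j, h⟩] at h3
        refine le_trans (le_of_eq ?_) h3
        apply Finset.sum_congr rfl
        intro p _
        rw [hβ]
        rw [dotProduct_comm]
      have h4 : (0:ℝ) ≤ ∑ p, (u p ⬝ᵥ lsv M ⟨j, h⟩) ^ 2 :=
        Finset.sum_nonneg fun p _ => sq_nonneg _
      have h5 : (0:ℝ) ≤ ∑ p, (β p ⟨j, h⟩) ^ 2 :=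
        Finset.sum_nonneg fun p _ => sq_nonneg _
      nlinarith [hcs, h1, h2, h4, h5]
  have hclaimA' : ∀ l, l ≤ n → ∑ j ∈ Finset.range l, c j ≤ (k : ℝ) := by
    intro l hl
    set emb : Fin l → Fin n := fun t => ⟨(t : ℕ), lt_of_lt_of_le t.isLt hl⟩ with hemb
    have hembinj : Function.Injective emb := by
      intro t t' htt'
      apply Fin.ext
      simpa [hemb, Fin.ext_iff] using htt' 
    have hsum : ∑ j ∈ Finset.range l, c j
        = ∑ p, u p ⬝ᵥ (∑ t : Fin l, β p (emb t) • lsv M (emb t)) := by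
      rw [← Fin.sum_univ_eq_sum_range c l]
      have h1 : ∀ t : Fin l, c (t : ℕ) = ∑ p, (u p ⬝ᵥ lsv M (emb t)) * β p (emb t) := by
        intro t
        rw [hc]
        simp only [dif_pos (lt_of_lt_of_le t.isLt hl)]
        rfl
      rw [Finset.sum_congr rfl (fun t _ => h1 t), Finset.sum_comm]
      apply Finset.sum_congr rfl
      intro p _
      rw [dot_sum_right]
      apply Finset.sum_congr rfl
      intro t _
      rw [dotProduct_smul, smul_eq_mul]
      ring
    rw [hsum]
    have hterm : ∀ p, u p ⬝ᵥ (∑ t : Fin l, β p (emb t) • lsv M (emb t)) ≤ 1 := by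
      intro p
      set w := ∑ t : Fin l, β p (emb t) • lsv M (emb t) with hw
      have hww : w ⬝ᵥ w ≤ ∑ t : Fin l, β p (emb t) ^ 2 :=
        subortho_dot_le _ (fun t t' htt' => lsv_dot_ne M (fun he => htt' (hembinj he)))
          (fun t => lsv_dot_self_le M _) _
      have hsub : ∑ t : Fin l, β p (emb t) ^ 2 ≤ ∑ j : Fin n, β p j ^ 2 := by
        rw [← Finset.sum_image (f := fun j : Fin n => β p j ^ 2)
          (g := emb) (fun t _ t' _ htt' => hembinj htt')]
        exact Finset.sum_le_sum_of_subset_of_nonneg (Finset.subset_univ _)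
          (fun j _ _ => sq_nonneg _)
      have hw1 : w ⬝ᵥ w ≤ 1 := le_trans hww (le_trans hsub (hβb p))
      calc u p ⬝ᵥ w ≤ Real.sqrt (u p ⬝ᵥ u p) * Real.sqrt (w ⬝ᵥ w) := dot_cs _ _
        _ ≤ 1 := by
            rw [hu.1 p, Real.sqrt_one, one_mul]
            exact Real.sqrt_le_one.mpr hw1
    calc ∑ p, u p ⬝ᵥ (∑ t : Fin l, β p (emb t) • lsv M (emb t)) ≤ ∑ (p : κ), (1:ℝ) :=
          Finset.sum_le_sum (fun p _ => hterm p)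
      _ = (k : ℝ) := by simp [hk]
  have hczero : ∀ j, n ≤ j → c j = 0 := by
    intro j hj
    rw [hc]
    dsimp only
    exact dif_neg (by omega)
  have hclaimA : ∀ l, ∑ j ∈ Finset.range l, c j ≤ (k : ℝ) := by
    intro l
    rcases le_or_gt l n with hl | hl
    · exact hclaimA' l hl
    · have heq : ∑ j ∈ Finset.range n, c j = ∑ j ∈ Finset.range l, c j :=
        Finset.sum_subset (Finset.range_subset_range.2 (le_of_lt hl))
          (fun j _ hj => hczero j (by simp at hj ⊢; omega))
      rw [← heq]
      exact hclaimA' n le_rfl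
  set yN : ℕ → ℝ := fun j => if j < k then 1 else 0 with hyN
  have hyNsum : ∀ l, ∑ j ∈ Finset.range l, yN j = ((min l k : ℕ) : ℝ) := by
    intro l
    rw [hyN]
    rw [Finset.sum_boole, range_filter_lt, Finset.card_range]
  have hD : ∀ l, 0 ≤ ∑ j ∈ Finset.range l, (yN j - c j) := by
    intro l
    rw [Finset.sum_sub_distrib, hyNsum l]
    rcases le_or_gt l k with h | h
    · rw [min_eq_left h]
      have h1 : ∑ j ∈ Finset.range l, c j ≤ (l : ℝ) := by
        calc ∑ j ∈ Finset.range l, c j ≤ ∑ j ∈ Finset.range l, (1:ℝ) :=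
              Finset.sum_le_sum (fun j _ => hc_le_one j)
          _ = (l : ℝ) := by simp
      linarith
    · rw [min_eq_right (le_of_lt h)]
      linarith [hclaimA l]
  have habel := abel_compare (sval M) c yN (fun a b hab => sval_antitone M hab)
    (sval_nonneg M) hD n
  have hrhs : ∑ j ∈ Finset.range n, sval M j * yN j ≤ ∑ j ∈ Finset.range k, sval M j := by
    have h1 : ∀ j, sval M j * yN j = if j < k then sval M j else 0 := by
      intro j
      by_cases hjk : j < k <;> simp [hyN, hjk]
    rw [Finset.sum_congr rfl (fun j _ => h1 j), Finset.sum_ite, Finset.sum_const_zero,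
      add_zero]
    have h2 : Finset.filter (fun j => j < k) (Finset.range n) = Finset.range (min n k) :=
      range_filter_lt n k
    rw [h2]
    exact Finset.sum_le_sum_of_subset_of_nonneg
      (Finset.range_subset_range.2 (min_le_right n k)) (fun j _ _ => sval_nonneg M j)
  rw [hstep2]
  exact le_trans habel hrhs

end PER
end C7
section C8
namespace PER
variable {m n : ℕ}

lemma sum_range_le_fin (a : ℕ → ℝ) (k : ℕ) (ha0 : ∀ j, n ≤ j → a j = 0) :
    ∑ j ∈ Finset.range k, a j
      = ∑ j ∈ Finset.univ.filter (fun j : Fin n => (j : ℕ) < k), a (j : ℕ) := by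
  classical
  have h1 : ∑ j ∈ Finset.range k, a j = ∑ j ∈ Finset.range (min k n), a j := by
    rcases le_or_gt k n with h | h
    · rw [min_eq_left h]
    · rw [min_eq_right (le_of_lt h)]
      exact (Finset.sum_subset (Finset.range_subset_range.2 (le_of_lt h))
        (fun j _ hj => ha0 j (by simp at hj ⊢; omega))).symm
  rw [h1]
  have h2 : ∑ j ∈ Finset.range n, (if j < k then a j else 0) = ∑ j ∈ Finset.range (min k n), a j := by
    rw [Finset.sum_ite, Finset.sum_const_zero, add_zero]
    have : Finset.filter (fun j => j < k) (Finset.range n) = Finset.range (min n k) :=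
      range_filter_lt n k
    rw [this, min_comm]
  rw [← h2, ← Fin.sum_univ_eq_sum_range (fun j => if j < k then a j else 0) n]
  rw [Finset.sum_ite, Finset.sum_const_zero, add_zero]

/-- Ky Fan style triangle inequality for partial sums of singular values. -/
lemma kyfan_sub (Nm L : Matrix (Fin m) (Fin n) ℝ) (k : ℕ) :
    ∑ j ∈ Finset.range k, sval (Nm - L) j
      ≤ ∑ j ∈ Finset.range k, sval Nm j + ∑ j ∈ Finset.range k, sval L j := by
  classical
  set W := Nm - L with hW
  set Fn' : Finset (Fin n) :=
    (Finset.univ.filter (fun j : Fin n => (j : ℕ) < k)).filter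
      (fun j => sval W (j : ℕ) ≠ 0) with hFn'
  have hLHS : ∑ j ∈ Finset.range k, sval W j = ∑ p : ↥Fn', sval W ((p : Fin n) : ℕ) := by
    rw [sum_range_le_fin (sval W) k (fun j hj => sval_of_le W hj)]
    rw [← Finset.sum_filter_ne_zero]
    rw [← Finset.sum_coe_sort]
  set x : ↥Fn' → (Fin n → ℝ) := fun p => rsv W (p : Fin n).isLt with hx
  set u : ↥Fn' → (Fin m → ℝ) := fun p => lsv W (p : Fin n) with hu
  have hxo : OrthoFam x := by
    constructor
    · intro p; simpa using rsv_dot W (p : Fin n).isLt (p : Fin n).isLt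
    · intro p q hpq
      have hne : ((p : Fin n) : ℕ) ≠ ((q : Fin n) : ℕ) := by
        intro he
        exact hpq (Subtype.ext (Fin.ext he))
      have := rsv_dot W (p : Fin n).isLt (q : Fin n).isLt
      rw [if_neg hne] at this
      exact this
  have hsne : ∀ p : ↥Fn', sval W ((p : Fin n) : ℕ) ≠ 0 := by
    intro p
    have h2 := p.2
    simp only [hFn', Finset.mem_filter] at h2
    exact h2.2
  have huo : OrthoFam u := by
    constructor
    · intro p
      rw [hu]
      show lsv W (p : Fin n) ⬝ᵥ lsv W (p : Fin n) = 1
      rw [lsv_dot_self, if_neg (hsne p)]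
    · intro p q hpq
      exact lsv_dot_ne W (fun he => hpq (Subtype.ext he))
  have hcard : Fintype.card ↥Fn' ≤ k := by
    rw [Fintype.card_coe]
    have : Fn'.card ≤ (Finset.range k).card := by
      refine Finset.card_le_card_of_injOn (fun j => (j : ℕ)) ?_ ?_
      · intro j hj
        rw [hFn', Finset.mem_coe, Finset.mem_filter, Finset.mem_filter] at hj
        simp [hj.1.2]
      · intro a _ b _ hab
        exact Fin.ext hab
    simpa using this
  have hval : ∀ p : ↥Fn', sval W ((p : Fin n) : ℕ) = u p ⬝ᵥ (W *ᵥ x p) := by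
    intro p
    rw [hx, hu]
    show _ = lsv W (p : Fin n) ⬝ᵥ (W *ᵥ rsv W (p : Fin n).isLt)
    rw [M_rsv_eq W (p : Fin n), dotProduct_smul, lsv_dot_self, if_neg (hsne p)]
    simp
  rw [hLHS, Finset.sum_congr rfl (fun p _ => hval p)]
  have hsplit : ∀ p : ↥Fn', u p ⬝ᵥ (W *ᵥ x p)
      = u p ⬝ᵥ (Nm *ᵥ x p) + (-u p) ⬝ᵥ (L *ᵥ x p) := by
    intro p
    rw [hW, Matrix.sub_mulVec, dotProduct_sub, neg_dotProduct]
    ring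
  rw [Finset.sum_congr rfl (fun p _ => hsplit p), Finset.sum_add_distrib]
  have hneg : OrthoFam (fun p : ↥Fn' => -u p) := by
    constructor
    · intro p; rw [neg_dotProduct, dotProduct_neg, neg_neg]; exact huo.1 p
    · intro p q hpq; rw [neg_dotProduct, dotProduct_neg, neg_neg]; exact huo.2 p q hpq
  have t1 := trace_bound Nm huo hxo
  have t2 := trace_bound L hneg hxo
  have hmono : ∀ (Mm : Matrix (Fin m) (Fin n) ℝ),
      ∑ j ∈ Finset.range (Fintype.card ↥Fn'), sval Mm j ≤ ∑ j ∈ Finset.range k, sval Mm j :=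
    fun Mm => Finset.sum_le_sum_of_subset_of_nonneg (Finset.range_subset_range.2 hcard)
      (fun j _ _ => sval_nonneg Mm j)
  calc ∑ p : ↥Fn', u p ⬝ᵥ (Nm *ᵥ x p) + ∑ p : ↥Fn', (-u p) ⬝ᵥ (L *ᵥ x p)
      ≤ ∑ j ∈ Finset.range (Fintype.card ↥Fn'), sval Nm j
        + ∑ j ∈ Finset.range (Fintype.card ↥Fn'), sval L j := add_le_add t1 t2
    _ ≤ _ := add_le_add (hmono Nm) (hmono L)

end PER
end C8
section C9
namespace PER
variable {m n r : ℕ}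

/-- sandwich lemma: bound `sval (M * P) i` via a subspace `Y` orthogonal to the `v`'s. -/
lemma sval_mulP_le {M : Matrix (Fin m) (Fin n) ℝ} {P : Matrix (Fin n) (Fin n) ℝ}
    {v : Fin r → (Fin n → ℝ)} (hv : OrthoFam v)
    (hPv : ∀ a, P *ᵥ v a = 0) (Y : Submodule ℝ (Fin n → ℝ))
    (hPy : ∀ y ∈ Y, P *ᵥ y = y) (hvy : ∀ y ∈ Y, ∀ a, v a ⬝ᵥ y = 0)
    {c : ℝ} (hc : 0 ≤ c) (hqy : ∀ y ∈ Y, (M *ᵥ y) ⬝ᵥ (M *ᵥ y) ≤ c ^ 2 * (y ⬝ᵥ y))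
    {i : ℕ} (hdim : n ≤ r + Module.finrank ℝ Y + i) : sval (M * P) i ≤ c := by
  have hinf : Submodule.span ℝ (Set.range v) ⊓ Y = ⊥ := by
    rw [Submodule.eq_bot_iff]
    rintro z ⟨hz1, hz2⟩
    have h0 : z ⬝ᵥ z = 0 := span_dot_zero (fun a => hvy z hz2 a) z hz1
    exact dotProduct_self_eq_zero.mp h0
  have hsup := Submodule.finrank_sup_add_finrank_inf_eq (Submodule.span ℝ (Set.range v)) Y
  rw [hinf, finrank_bot, add_zero, hv.finrank_span, Fintype.card_fin] at hsup
  apply sval_le hc (Submodule.span ℝ (Set.range v) ⊔ Y)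
  · omega
  · intro x hx
    rw [Submodule.mem_sup] at hx
    obtain ⟨p, hp, y, hy, rfl⟩ := hx
    have hPp : P *ᵥ p = 0 := by
      have hker : Submodule.span ℝ (Set.range v) ≤ LinearMap.ker P.mulVecLin := by
        rw [Submodule.span_le]
        rintro _ ⟨a, rfl⟩
        rw [SetLike.mem_coe, LinearMap.mem_ker, Matrix.mulVecLin_apply]
        exact hPv a
      have := hker hp
      rwa [LinearMap.mem_ker, Matrix.mulVecLin_apply] at this
    have hMP : (M * P) *ᵥ (p + y) = M *ᵥ y := by
      rw [← Matrix.mulVec_mulVec, Matrix.mulVec_add, hPp, hPy y hy, zero_add]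
    rw [hMP]
    have hpy : p ⬝ᵥ y = 0 := span_dot_zero (fun a => hvy y hy a) p hp
    have hyp : y ⬝ᵥ p = 0 := by rw [dotProduct_comm]; exact hpy
    have hxx : (p + y) ⬝ᵥ (p + y) = p ⬝ᵥ p + y ⬝ᵥ y := by
      rw [add_dotProduct, dotProduct_add, dotProduct_add, hpy, hyp]
      ring
    have h1 := hqy y hy
    have h2 : c ^ 2 * (y ⬝ᵥ y) ≤ c ^ 2 * ((p + y) ⬝ᵥ (p + y)) := by
      rw [hxx]
      have := dot_nonneg p
      nlinarith [sq_nonneg c]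
    exact le_trans h1 h2

section Setup
variable (A Z : Matrix (Fin m) (Fin n) ℝ) (Vhat : Matrix (Fin n) (Fin r) ℝ)

/-- columns of `Vhat`. -/
def vcol : Fin r → (Fin n → ℝ) := fun a => fun i => Vhat i a

/-- the projection `P = 1 - V̂ V̂ᵀ`. -/
def Pproj : Matrix (Fin n) (Fin n) ℝ := 1 - Vhat * Vhatᵀ

variable {A Z Vhat}

lemma vcol_ortho (hortho : Vhatᵀ * Vhat = 1) : OrthoFam (vcol Vhat) := by
  have key : ∀ a b, vcol Vhat a ⬝ᵥ vcol Vhat b = (1 : Matrix (Fin r) (Fin r) ℝ) a b := by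
    intro a b
    rw [← hortho]
    simp [Matrix.mul_apply, Matrix.transpose_apply, vcol, dotProduct]
  constructor
  · intro a; rw [key a a, Matrix.one_apply_eq]
  · intro a b hab; rw [key a b, Matrix.one_apply_ne hab]

lemma Vt_mulVec (y : Fin n → ℝ) : Vhatᵀ *ᵥ y = fun a => vcol Vhat a ⬝ᵥ y := by
  ext a
  simp [Matrix.mulVec, Matrix.transpose_apply, vcol, dotProduct]

lemma Pproj_fix {y : Fin n → ℝ} (hy : ∀ a, vcol Vhat a ⬝ᵥ y = 0) :
    Pproj Vhat *ᵥ y = y := by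
  rw [Pproj, Matrix.sub_mulVec, Matrix.one_mulVec, ← Matrix.mulVec_mulVec, Vt_mulVec]
  have : (fun a => vcol Vhat a ⬝ᵥ y) = (0 : Fin r → ℝ) := funext hy
  rw [this, Matrix.mulVec_zero, sub_zero]

lemma Pproj_vcol (hortho : Vhatᵀ * Vhat = 1) (a : Fin r) :
    Pproj Vhat *ᵥ vcol Vhat a = 0 := by
  rw [Pproj, Matrix.sub_mulVec, Matrix.one_mulVec, ← Matrix.mulVec_mulVec, Vt_mulVec]
  have h1 : (fun b => vcol Vhat b ⬝ᵥ vcol Vhat a) = fun b => if b = a then (1:ℝ) else 0 := by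
    funext b
    rcases eq_or_ne b a with rfl | hba
    · rw [(vcol_ortho hortho).1 b, if_pos rfl]
    · rw [(vcol_ortho hortho).2 b a hba, if_neg hba]
  rw [h1]
  have h2 : Vhat *ᵥ (fun b => if b = a then (1:ℝ) else 0) = vcol Vhat a := by
    ext i
    simp [Matrix.mulVec, dotProduct, vcol]
  rw [h2, sub_self]

lemma Pproj_transpose : (Pproj Vhat)ᵀ = Pproj Vhat := by
  rw [Pproj, Matrix.transpose_sub, Matrix.transpose_one, Matrix.transpose_mul,
    Matrix.transpose_transpose]

/-- the orthocomplement of the columns of `Vhat`. -/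
def Vperp (Vhat : Matrix (Fin n) (Fin r) ℝ) : Submodule ℝ (Fin n → ℝ) :=
  LinearMap.ker (Vhatᵀ.mulVecLin)

lemma mem_Vperp {y : Fin n → ℝ} : y ∈ Vperp Vhat ↔ ∀ a, vcol Vhat a ⬝ᵥ y = 0 := by
  rw [Vperp, LinearMap.mem_ker, Matrix.mulVecLin_apply, Vt_mulVec]
  constructor
  · intro h a; exact congrFun h a
  · intro h; funext a; exact h a

lemma Vperp_finrank : n - r ≤ Module.finrank ℝ (Vperp Vhat) := by
  have h1 := LinearMap.finrank_range_add_finrank_ker (Vhatᵀ.mulVecLin)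
  rw [finrank_pi_n] at h1
  have h2 : (Vhatᵀ).rank ≤ r := by
    have := Matrix.rank_le_card_height (Vhatᵀ)
    simpa using this
  have h3 : (Vhatᵀ).rank = Module.finrank ℝ (LinearMap.range (Vhatᵀ.mulVecLin)) := rfl
  rw [Vperp]
  omega

lemma sval_ZP_le (hortho : Vhatᵀ * Vhat = 1) (i : ℕ) :
    sval (Z * Pproj Vhat) i ≤ sval Z i := by
  obtain ⟨SiZ, hSdim, hSq⟩ := exists_bot_space Z i
  rcases le_or_gt n i with h | h
  · rw [sval_of_le _ h]; exact sval_nonneg Z i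
  apply sval_mulP_le (vcol_ortho hortho) (Pproj_vcol hortho) (Vperp Vhat ⊓ SiZ)
  · intro y hy; exact Pproj_fix (mem_Vperp.mp hy.1)
  · intro y hy; exact mem_Vperp.mp hy.1
  · exact sval_nonneg Z i
  · intro y hy; exact hSq y hy.2
  · have h1 := Submodule.finrank_sup_add_finrank_inf_eq (Vperp Vhat) SiZ
    have h2 : Module.finrank ℝ ↥(Vperp Vhat ⊔ SiZ) ≤ n := by
      have := Submodule.finrank_le (Vperp Vhat ⊔ SiZ)
      rwa [finrank_pi_n] at this
    have h3 := Vperp_finrank (Vhat := Vhat)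
    omega

lemma sval_AP_zero (hA : A.rank = r) {i : ℕ} (hi : r ≤ i) :
    sval (A * Pproj Vhat) i = 0 := by
  apply sval_zero_of_rank
  calc (A * Pproj Vhat).rank ≤ A.rank := Matrix.rank_mul_le_left A (Pproj Vhat)
    _ = r := hA
    _ ≤ i := hi

lemma sval_B_shift (hA : A.rank = r) (i : ℕ) : sval (A + Z) (r + i) ≤ sval Z i := by
  have h1 := weyl A Z r i
  have h2 : sval A r = 0 := sval_zero_of_rank A (le_of_eq hA)
  rw [h2, zero_add] at h1
  exact h1

end Setup
end PER
end C9
section C10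
namespace PER
variable {m n r : ℕ} {A Z : Matrix (Fin m) (Fin n) ℝ} {Vhat : Matrix (Fin n) (Fin r) ℝ}

lemma sval_BP_le (hortho : Vhatᵀ * Vhat = 1)
    (hsing : ∀ j : Fin r, ((A + Z)ᵀ * (A + Z)) *ᵥ (fun i => Vhat i j)
      = (sval (A + Z) (j : ℕ) ^ 2) • (fun i => Vhat i j))
    (hA : A.rank = r) (i : ℕ) :
    sval ((A + Z) * Pproj Vhat) i ≤ sval Z i := by
  classical
  set B := A + Z with hB
  set P := Pproj Vhat with hP
  set BP := B * P with hBP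
  set τ := sval Z i ^ 2 with hτ
  have hτ0 : 0 ≤ τ := by rw [hτ]; exact sq_nonneg _
  rcases le_or_gt n i with hn | hn
  · rw [sval_of_le _ hn]; exact sval_nonneg Z i
  set g : Fin n → (Fin n → ℝ) := fun j => rsv BP j.isLt with hg
  have hBPv : ∀ a, BP *ᵥ vcol Vhat a = 0 := by
    intro a
    rw [hBP, ← Matrix.mulVec_mulVec, hP, Pproj_vcol hortho, Matrix.mulVec_zero]
  have hGv : ∀ a, (BPᵀ * BP) *ᵥ vcol Vhat a = 0 := by
    intro a
    rw [← Matrix.mulVec_mulVec, hBPv, Matrix.mulVec_zero]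
  have hgv : ∀ j : Fin n, sval BP (j : ℕ) ^ 2 ≠ 0 → ∀ a, vcol Vhat a ⬝ᵥ g j = 0 := by
    intro j hj a
    have h1 : vcol Vhat a ⬝ᵥ ((BPᵀ * BP) *ᵥ g j) = 0 := by
      rw [dot_sym _ (transpose_MtM BP), hGv, zero_dotProduct]
    rw [hg] at h1 ⊢
    rw [rsv_eig BP j.isLt, dotProduct_smul, smul_eq_mul] at h1
    exact (mul_eq_zero.mp h1).resolve_left hj
  have hHv : ∀ a : Fin r, (Bᵀ * B) *ᵥ vcol Vhat a = (sval B (a : ℕ) ^ 2) • vcol Vhat a :=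
    fun a => hsing a
  have hHg : ∀ j : Fin n, sval BP (j : ℕ) ^ 2 ≠ 0 →
      (Bᵀ * B) *ᵥ g j = (sval BP (j : ℕ) ^ 2) • g j := by
    intro j hj
    have hperp := hgv j hj
    have hPg : P *ᵥ g j = g j := Pproj_fix hperp
    have hGg : (BPᵀ * BP) *ᵥ g j = (sval BP (j : ℕ) ^ 2) • g j := rsv_eig BP j.isLt
    have hGP : (BPᵀ * BP) *ᵥ g j = P *ᵥ ((Bᵀ * B) *ᵥ g j) := by
      calc (BPᵀ * BP) *ᵥ g j = BPᵀ *ᵥ (BP *ᵥ g j) := (Matrix.mulVec_mulVec _ _ _).symm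
        _ = BPᵀ *ᵥ (B *ᵥ (P *ᵥ g j)) := by rw [hBP, ← Matrix.mulVec_mulVec]
        _ = BPᵀ *ᵥ (B *ᵥ g j) := by rw [hPg]
        _ = (Pᵀ * Bᵀ) *ᵥ (B *ᵥ g j) := by rw [hBP, Matrix.transpose_mul]
        _ = Pᵀ *ᵥ (Bᵀ *ᵥ (B *ᵥ g j)) := (Matrix.mulVec_mulVec _ _ _).symm
        _ = P *ᵥ ((Bᵀ * B) *ᵥ g j) := by
            rw [hP, Pproj_transpose,
              show Bᵀ *ᵥ (B *ᵥ g j) = (Bᵀ * B) *ᵥ g j from Matrix.mulVec_mulVec _ _ _]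
    have hHperp : ∀ a, vcol Vhat a ⬝ᵥ ((Bᵀ * B) *ᵥ g j) = 0 := by
      intro a
      rw [dot_sym _ (transpose_MtM B), hHv a, smul_dotProduct, hperp a, smul_zero]
    have hPH : P *ᵥ ((Bᵀ * B) *ᵥ g j) = (Bᵀ * B) *ᵥ g j := Pproj_fix hHperp
    rw [← hGg, hGP, hPH]
  have hne_of_high : ∀ j : Fin n, τ < sval BP (j : ℕ) ^ 2 → sval BP (j : ℕ) ^ 2 ≠ 0 :=
    fun j hj => (lt_of_le_of_lt hτ0 hj).ne'
  set sc := Fintype.card {j : Fin n // τ < sval BP (j : ℕ) ^ 2} with hsc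
  have hsc_le : sc ≤ i := by
    by_contra hsc_gt
    push_neg at hsc_gt
    have hsc1 : 1 ≤ sc := by omega
    set u := Fintype.card {a : Fin r // τ < sval B (a : ℕ) ^ 2} with hu
    set F : {a : Fin r // τ < sval B (a : ℕ) ^ 2} ⊕ {j : Fin n // τ < sval BP (j : ℕ) ^ 2}
        → (Fin n → ℝ) := Sum.elim (fun a => vcol Vhat a.1) (fun j => g j.1) with hF
    set lam : {a : Fin r // τ < sval B (a : ℕ) ^ 2} ⊕ {j : Fin n // τ < sval BP (j : ℕ) ^ 2}
        → ℝ := Sum.elim (fun a => sval B (a.1 : ℕ) ^ 2) (fun j => sval BP (j.1 : ℕ) ^ 2)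
      with hlam
    have hFo : OrthoFam F := by
      constructor
      · rintro (a | j)
        · exact (vcol_ortho hortho).1 a.1
        · simpa [hF, hg] using rsv_dot BP j.1.isLt j.1.isLt
      · rintro (a | j) (a' | j') hne
        · exact (vcol_ortho hortho).2 a.1 a'.1
            (fun h => hne (congrArg Sum.inl (Subtype.ext h)))
        · exact hgv j'.1 (hne_of_high _ j'.2) a.1
        · rw [dotProduct_comm]
          exact hgv j.1 (hne_of_high _ j.2) a'.1
        · have hjj : j.1 ≠ j'.1 := fun h => hne (congrArg Sum.inr (Subtype.ext h))
          have h2 := rsv_dot BP j.1.isLt j'.1.isLt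
          rw [if_neg (by simpa [Fin.ext_iff] using hjj)] at h2
          exact h2
    have hFeig : ∀ p, (Bᵀ * B) *ᵥ F p = lam p • F p := by
      rintro (a | j)
      · exact hHv a.1
      · exact hHg j.1 (hne_of_high _ j.2)
    have hFτ : ∀ p, τ < lam p := by rintro (a | j); exacts [a.2, j.2]
    have hcard : Fintype.card
        ({a : Fin r // τ < sval B (a : ℕ) ^ 2} ⊕ {j : Fin n // τ < sval BP (j : ℕ) ^ 2})
        = u + sc := by
      rw [Fintype.card_sum, ← hu, ← hsc]
    have hgt := sval_sq_gt hFo lam hFeig hFτ hcard (by omega)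
    have hur : u ≤ r := by
      rw [hu]
      simpa using Fintype.card_subtype_le (fun a : Fin r => τ < sval B (a : ℕ) ^ 2)
    rcases eq_or_lt_of_le hur with hur' | hur'
    · have h1 : r + i ≤ u + sc - 1 := by omega
      have h2 : sval B (u + sc - 1) ^ 2 ≤ sval B (r + i) ^ 2 := sval_sq_antitone B h1
      have h3 : sval B (r + i) ≤ sval Z i := sval_B_shift hA i
      have h4 : sval B (r + i) ^ 2 ≤ τ := by
        rw [hτ]
        exact pow_le_pow_left₀ (sval_nonneg _ _) h3 2
      linarith [hgt]
    · have hub : sval B u ^ 2 ≤ τ := by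
        by_contra hub
        push_neg at hub
        have hall : ∀ t : Fin (u + 1), τ < sval B (t : ℕ) ^ 2 :=
          fun t => lt_of_lt_of_le hub (sval_sq_antitone B (by have := t.isLt; omega))
        have hinj : Function.Injective
            (fun t : Fin (u + 1) =>
              (⟨⟨(t : ℕ), by have := t.isLt; omega⟩, hall t⟩ :
                {a : Fin r // τ < sval B (a : ℕ) ^ 2})) := by
          intro t t' htt'
          apply Fin.ext
          simpa [Subtype.ext_iff, Fin.ext_iff] using htt'
        have hcard2 := Fintype.card_le_of_injective _ hinj
        rw [Fintype.card_fin] at hcard2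
        omega
      have h2 : sval B (u + sc - 1) ^ 2 ≤ sval B u ^ 2 := sval_sq_antitone B (by omega)
      linarith [hgt]
  set glow : {j : Fin n // ¬ τ < sval BP (j : ℕ) ^ 2} → (Fin n → ℝ) :=
    fun j => g j.1 with hglow
  have hglowo : OrthoFam glow := by
    constructor
    · intro j; simpa using rsv_dot BP j.1.isLt j.1.isLt
    · intro j j' hne
      have hjj : j.1 ≠ j'.1 := fun h => hne (Subtype.ext h)
      have h2 := rsv_dot BP j.1.isLt j'.1.isLt
      rw [if_neg (by simpa [Fin.ext_iff] using hjj)] at h2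
      exact h2
  have hcard_low : Fintype.card {j : Fin n // ¬ τ < sval BP (j : ℕ) ^ 2} = n - sc := by
    have := Fintype.card_subtype_compl (fun j : Fin n => τ < sval BP (j : ℕ) ^ 2)
    rw [this, Fintype.card_fin, ← hsc]
  apply sval_mulP_le (vcol_ortho hortho) (Pproj_vcol hortho)
    (Vperp Vhat ⊓ Submodule.span ℝ (Set.range glow))
  · intro y hy; exact Pproj_fix (mem_Vperp.mp hy.1)
  · intro y hy; exact mem_Vperp.mp hy.1
  · exact sval_nonneg Z i
  · intro y hy
    have hPy : P *ᵥ y = y := Pproj_fix (mem_Vperp.mp hy.1)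
    have h1 : (B *ᵥ y) ⬝ᵥ (B *ᵥ y) = y ⬝ᵥ ((BPᵀ * BP) *ᵥ y) := by
      rw [dot_MtM BP y]
      have hBPy : BP *ᵥ y = B *ᵥ y := by
        rw [hBP, ← Matrix.mulVec_mulVec, hPy]
      rw [hBPy]
    obtain ⟨b, hb⟩ := hglowo.repr hy.2
    rw [h1, hb, eig_quad (BPᵀ * BP) hglowo (fun p => sval BP (p.1 : ℕ) ^ 2)
      (fun p => rsv_eig BP p.1.isLt) b, hglowo.dot_self_sum, ← hτ, Finset.mul_sum]
    apply Finset.sum_le_sum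
    intro p _
    exact mul_le_mul_of_nonneg_right (not_lt.mp p.2) (sq_nonneg _)
  · have h1 := Submodule.finrank_sup_add_finrank_inf_eq (Vperp Vhat)
      (Submodule.span ℝ (Set.range glow))
    have h2 : Module.finrank ℝ ↥(Vperp Vhat ⊔ Submodule.span ℝ (Set.range glow)) ≤ n := by
      have := Submodule.finrank_le (Vperp Vhat ⊔ Submodule.span ℝ (Set.range glow))
      rwa [finrank_pi_n] at this
    have h3 := Vperp_finrank (Vhat := Vhat)
    have h4 : Module.finrank ℝ ↥(Submodule.span ℝ (Set.range glow)) = n - sc := by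
      rw [hglowo.finrank_span, hcard_low]
    omega

end PER
end C10
section C11
namespace PER

lemma maj_rpow (x w : ℕ → ℝ) (hx0 : ∀ j, 0 ≤ x j) (hw0 : ∀ j, 0 ≤ w j)
    (hxa : ∀ a b : ℕ, a ≤ b → x b ≤ x a)
    (hpart : ∀ l, ∑ j ∈ Finset.range l, x j ≤ ∑ j ∈ Finset.range l, w j)
    {q : ℝ} (hq : 1 ≤ q) (R : ℕ) :
    (∑ j ∈ Finset.range R, x j ^ q) ^ (1 / q) ≤ (∑ j ∈ Finset.range R, w j ^ q) ^ (1 / q) := by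
  have hq0 : 0 < q := lt_of_lt_of_le zero_lt_one hq
  rcases eq_or_lt_of_le hq with hq1 | hq1
  · -- q = 1
    rw [← hq1]
    norm_num [Real.rpow_one]
    exact hpart R
  -- q > 1
  set Sx := ∑ j ∈ Finset.range R, x j ^ q with hSx
  set Sw := ∑ j ∈ Finset.range R, w j ^ q with hSw
  have hSx0 : 0 ≤ Sx := Finset.sum_nonneg fun j _ => Real.rpow_nonneg (hx0 j) q
  have hSw0 : 0 ≤ Sw := Finset.sum_nonneg fun j _ => Real.rpow_nonneg (hw0 j) q
  rcases eq_or_lt_of_le hSx0 with hSxz | hSxp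
  · rw [← hSxz, Real.zero_rpow (by positivity)]
    exact Real.rpow_nonneg hSw0 _
  set W : ℕ → ℝ := fun j => x j ^ (q - 1) with hW
  have hW0 : ∀ j, 0 ≤ W j := fun j => Real.rpow_nonneg (hx0 j) _
  have hWa : ∀ a b : ℕ, a ≤ b → W b ≤ W a := fun a b hab =>
    Real.rpow_le_rpow (hx0 b) (hxa a b hab) (by linarith)
  have hkey : ∀ j, W j * x j = x j ^ q := by
    intro j
    rcases eq_or_lt_of_le (hx0 j) with hz | hp
    · rw [← hz, mul_zero, Real.zero_rpow (by positivity)]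
    · rw [hW]
      have : x j ^ (q - 1) * x j ^ (1:ℝ) = x j ^ (q - 1 + 1) := (Real.rpow_add hp _ _).symm
      rw [Real.rpow_one] at this
      rw [this, sub_add_cancel]
  have hD : ∀ l, 0 ≤ ∑ j ∈ Finset.range l, (w j - x j) := by
    intro l
    rw [Finset.sum_sub_distrib]
    linarith [hpart l]
  have habel := abel_compare W x w hWa hW0 hD R
  have hstep1 : Sx ≤ ∑ j ∈ Finset.range R, W j * w j := by
    calc Sx = ∑ j ∈ Finset.range R, W j * x j := by
          rw [hSx]; exact (Finset.sum_congr rfl fun j _ => hkey j).symm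
      _ ≤ ∑ j ∈ Finset.range R, W j * w j := habel
  set q' := q / (q - 1) with hq'
  have hconj : q'.HolderConjugate q := (Real.HolderConjugate.conjExponent hq1).symm
  have hholder := Real.inner_le_Lp_mul_Lq_of_nonneg (Finset.range R) hconj
    (f := W) (g := w) (fun j _ => hW0 j) (fun j _ => hw0 j)
  have hWq' : ∀ j, W j ^ q' = x j ^ q := by
    intro j
    rw [hW, ← Real.rpow_mul (hx0 j), hq']
    congr 1
    have hq1' : q - 1 ≠ 0 := by linarith
    field_simp
  have hsum_eq : ∑ j ∈ Finset.range R, W j ^ q' = Sx := by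
    rw [hSx]; exact Finset.sum_congr rfl fun j _ => hWq' j
  rw [hsum_eq] at hholder
  have h2 : Sx ≤ Sx ^ (1 / q') * Sw ^ (1 / q) := le_trans hstep1 hholder
  have hsum_inv : 1 / q' + 1 / q = 1 := by
    rw [one_div, one_div]
    exact hconj.inv_add_inv_eq_one
  have hSxpow : Sx = Sx ^ (1 / q') * Sx ^ (1 / q) := by
    rw [← Real.rpow_add hSxp, hsum_inv, Real.rpow_one]
  have h4 : Sx ^ (1 / q') * Sx ^ (1 / q) ≤ Sx ^ (1 / q') * Sw ^ (1 / q) := by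
    rw [← hSxpow]
    exact h2
  have hpos' : 0 < Sx ^ (1 / q') := Real.rpow_pos_of_pos hSxp _
  exact le_of_mul_le_mul_left h4 hpos' 

end PER
end C11


/-- perturbation projection error bound (right version).
`Vhat` consists of top-`r` right singular vectors of `B = A + Z`: its columns are
orthonormal eigenvectors of `Bᵀ B` with eigenvalues `σ_j(B)²`, `j = 1,…,r`. -/
theorem projection_error_right {m n : ℕ} (r : ℕ) (A Z : Matrix (Fin m) (Fin n) ℝ)
    (hA : A.rank = r)
    (Vhat : Matrix (Fin n) (Fin r) ℝ)
    (hortho : Vhatᵀ * Vhat = 1)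
    (hsing : ∀ j : Fin r, ((A + Z)ᵀ * (A + Z)) *ᵥ (fun i => Vhat i j)
      = (sval (A + Z) (j : ℕ) ^ 2) • (fun i => Vhat i j)) :
    ∀ q : ℝ≥0∞, 1 ≤ q →
      schattenE q (A * (1 - Vhat * Vhatᵀ)) ≤ 2 * schattenTE q r Z := by

  intro q hq
  have hPdef : (1 - Vhat * Vhatᵀ) = PER.Pproj Vhat := rfl
  rw [hPdef]
  have hZP : ∀ i, sval (Z * PER.Pproj Vhat) i ≤ sval Z i := PER.sval_ZP_le hortho
  have hBP : ∀ i, sval ((A + Z) * PER.Pproj Vhat) i ≤ sval Z i :=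
    PER.sval_BP_le hortho hsing hA
  have hAP0 : ∀ i : ℕ, r ≤ i → sval (A * PER.Pproj Vhat) i = 0 :=
    fun i hi => PER.sval_AP_zero hA hi
  have hAPeq : A * PER.Pproj Vhat
      = (A + Z) * PER.Pproj Vhat - Z * PER.Pproj Vhat := by
    rw [← Matrix.sub_mul, add_sub_cancel_right]
  have hpart : ∀ k, ∑ j ∈ Finset.range k, sval (A * PER.Pproj Vhat) j
      ≤ ∑ j ∈ Finset.range k, (2 * sval Z j) := by
    intro k
    calc ∑ j ∈ Finset.range k, sval (A * PER.Pproj Vhat) j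
        ≤ ∑ j ∈ Finset.range k, sval ((A + Z) * PER.Pproj Vhat) j
          + ∑ j ∈ Finset.range k, sval (Z * PER.Pproj Vhat) j := by
          rw [hAPeq]; exact PER.kyfan_sub _ _ k
      _ ≤ ∑ j ∈ Finset.range k, sval Z j + ∑ j ∈ Finset.range k, sval Z j :=
          add_le_add (Finset.sum_le_sum fun j _ => hBP j)
            (Finset.sum_le_sum fun j _ => hZP j)
      _ = ∑ j ∈ Finset.range k, (2 * sval Z j) := by
          rw [← Finset.sum_add_distrib]
          exact Finset.sum_congr rfl fun j _ => by ring
  rcases eq_or_ne q ∞ with hqinf | hqinf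
  · subst hqinf
    unfold schattenE schattenTE
    rw [if_pos rfl, if_pos rfl]
    have h1 := hpart 1
    simpa [Finset.sum_range_one] using h1
  · have hqr : 1 ≤ q.toReal := by
      have := ENNReal.toReal_mono hqinf hq
      simpa using this
    have hqr0 : 0 < q.toReal := lt_of_lt_of_le zero_lt_one hqr
    unfold schattenE schattenTE
    rw [if_neg hqinf, if_neg hqinf]
    have hrn : r ≤ n := by
      rw [← hA]
      have := Matrix.rank_le_card_width A
      simpa using this
    have hsum_red : ∑ j ∈ Finset.range n, sval (A * PER.Pproj Vhat) j ^ q.toReal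
        = ∑ j ∈ Finset.range r, sval (A * PER.Pproj Vhat) j ^ q.toReal := by
      symm
      apply Finset.sum_subset (Finset.range_subset_range.2 hrn)
      intro j _ hj
      rw [Finset.mem_range, not_lt] at hj
      rw [hAP0 j hj, Real.zero_rpow (ne_of_gt hqr0)]
    rw [hsum_red]
    have hmaj := PER.maj_rpow (sval (A * PER.Pproj Vhat)) (fun j => 2 * sval Z j)
      (fun j => PER.sval_nonneg _ j) (fun j => mul_nonneg (by norm_num) (PER.sval_nonneg Z j))
      (fun a b hab => PER.sval_antitone _ hab) hpart hqr r
    refine le_trans hmaj ?_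
    have h2 : ∀ j : ℕ, (2 * sval Z j) ^ q.toReal = 2 ^ q.toReal * sval Z j ^ q.toReal :=
      fun j => Real.mul_rpow (by norm_num) (PER.sval_nonneg Z j)
    rw [Finset.sum_congr rfl (fun j _ => h2 j), ← Finset.mul_sum]
    have hT0 : 0 ≤ ∑ j ∈ Finset.range r, sval Z j ^ q.toReal :=
      Finset.sum_nonneg fun j _ => Real.rpow_nonneg (PER.sval_nonneg Z j) _
    rw [Real.mul_rpow (Real.rpow_nonneg (by norm_num) _) hT0]
    have h3 : ((2:ℝ) ^ q.toReal) ^ (1 / q.toReal) = 2 := by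
      rw [← Real.rpow_mul (by norm_num : (0:ℝ) ≤ 2), mul_one_div_cancel (ne_of_gt hqr0),
        Real.rpow_one]
    rw [h3]
end

section
/- Let U ∈ ℝ^{m×r} have orthonormal columns and A, B ∈ ℝ^{m×n}. For any q with 2 ≤ q ≤ ∞, ‖P_U A + P_{U⊥} B‖_q ≤ (‖P_U A‖_q² + ‖P_{U⊥} B‖_q²)^{1/2}, where P_U = UU^⊤ and P_{U⊥} = I − UU^⊤. -/
open scoped ENNReal
open Matrix

section Aux

variable {n : ℕ}

private lemma psd_tmul {m n : ℕ} (A : Matrix (Fin m) (Fin n) ℝ) : (Aᵀ * A).PosSemidef := by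
  have := Matrix.posSemidef_conjTranspose_mul_self A
  rwa [Matrix.conjTranspose_eq_transpose_of_trivial] at this

/-- Diagonal of `star W * S * W` as a doubly stochastic mixture of eigenvalues of `S`. -/
private lemma diag_conj_repr (S : Matrix (Fin n) (Fin n) ℝ) (hS : S.IsHermitian)
    (W : Matrix (Fin n) (Fin n) ℝ) (hW : W ∈ Matrix.unitaryGroup (Fin n) ℝ) :
    ∃ Q : Matrix (Fin n) (Fin n) ℝ,
      (∀ j, ∑ k, Q j k ^ 2 = 1) ∧ (∀ k, ∑ j, Q j k ^ 2 = 1) ∧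
      (∀ j, (star W * S * W) j j = ∑ k, Q j k ^ 2 * hS.eigenvalues k) := by
  set V : Matrix (Fin n) (Fin n) ℝ := (hS.eigenvectorUnitary : Matrix (Fin n) (Fin n) ℝ) with hVdef
  have hV : V ∈ Matrix.unitaryGroup (Fin n) ℝ := hS.eigenvectorUnitary.2
  have hV1 : V * star V = 1 := (Matrix.mem_unitaryGroup_iff).mp hV
  have hV2 : star V * V = 1 := (Matrix.mem_unitaryGroup_iff').mp hV
  have hW1 : W * star W = 1 := (Matrix.mem_unitaryGroup_iff).mp hW
  have hW2 : star W * W = 1 := (Matrix.mem_unitaryGroup_iff').mp hW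
  have hstarQ : star (star W * V) = star V * W := by
    rw [Matrix.star_mul, star_star]
  have hQ1 : (star W * V) * star (star W * V) = 1 := by
    rw [hstarQ]
    calc star W * V * (star V * W) = star W * (V * star V * W) := by
          simp only [Matrix.mul_assoc]
      _ = star W * W := by rw [hV1, Matrix.one_mul]
      _ = 1 := hW2
  have hQ2 : star (star W * V) * (star W * V) = 1 := by
    rw [hstarQ]
    calc star V * W * (star W * V) = star V * (W * star W * V) := by
          simp only [Matrix.mul_assoc]
      _ = star V * V := by rw [hW1, Matrix.one_mul]
      _ = 1 := hV2
  have hsvw : star V * W = star (star W * V) := by rw [Matrix.star_mul, star_star]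
  refine ⟨star W * V, ?_, ?_, ?_⟩
  · intro j
    have h0 : ((star W * V) * star (star W * V)) j j = (1 : Matrix (Fin n) (Fin n) ℝ) j j := by
      rw [hQ1]
    rw [Matrix.one_apply_eq] at h0
    rw [← h0, Matrix.mul_apply]
    apply Finset.sum_congr rfl
    intro k _
    simp only [Matrix.star_apply, star_trivial]
    ring
  · intro k
    have h0 : (star (star W * V) * (star W * V)) k k = (1 : Matrix (Fin n) (Fin n) ℝ) k k := by
      rw [hQ2]
    rw [Matrix.one_apply_eq] at h0
    rw [← h0, Matrix.mul_apply]
    apply Finset.sum_congr rfl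
    intro j _
    simp only [Matrix.star_apply, star_trivial]
    ring
  · intro j
    have hSpec : S = V * Matrix.diagonal hS.eigenvalues * star V := by
      have h := hS.spectral_theorem
      simpa only [RCLike.ofReal_real_eq_id, Function.id_comp, Unitary.conjStarAlgAut_apply,
        Unitary.coe_star] using h
    have hconj : star W * S * W = (star W * V) * Matrix.diagonal hS.eigenvalues * (star V * W) := by
      conv_lhs => rw [hSpec]
      simp only [Matrix.mul_assoc]
    rw [hconj, Matrix.mul_apply]
    apply Finset.sum_congr rfl
    intro k _
    rw [Matrix.mul_diagonal, hsvw]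
    simp only [Matrix.star_apply, star_trivial]
    ring

private lemma diag_conj_nonneg {S : Matrix (Fin n) (Fin n) ℝ} (hS : S.PosSemidef)
    {W : Matrix (Fin n) (Fin n) ℝ} (hW : W ∈ Matrix.unitaryGroup (Fin n) ℝ) (j : Fin n) :
    0 ≤ (star W * S * W) j j := by
  obtain ⟨Q, _, _, hdiag⟩ := diag_conj_repr S hS.1 W hW
  rw [hdiag j]
  exact Finset.sum_nonneg fun k _ => mul_nonneg (sq_nonneg _) (hS.eigenvalues_nonneg k)

private lemma diag_conj_le {S : Matrix (Fin n) (Fin n) ℝ} (hS : S.PosSemidef)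
    {W : Matrix (Fin n) (Fin n) ℝ} (hW : W ∈ Matrix.unitaryGroup (Fin n) ℝ) {c : ℝ}
    (hc : ∀ k, hS.1.eigenvalues k ≤ c) (j : Fin n) :
    (star W * S * W) j j ≤ c := by
  obtain ⟨Q, hrow, _, hdiag⟩ := diag_conj_repr S hS.1 W hW
  rw [hdiag j]
  calc ∑ k, Q j k ^ 2 * hS.1.eigenvalues k ≤ ∑ k, Q j k ^ 2 * c :=
        Finset.sum_le_sum fun k _ => mul_le_mul_of_nonneg_left (hc k) (sq_nonneg _)
    _ = (∑ k, Q j k ^ 2) * c := by rw [Finset.sum_mul]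
    _ = c := by rw [hrow j, one_mul]

private lemma sum_diag_conj_rpow_le {S : Matrix (Fin n) (Fin n) ℝ} (hS : S.PosSemidef)
    {W : Matrix (Fin n) (Fin n) ℝ} (hW : W ∈ Matrix.unitaryGroup (Fin n) ℝ) {p : ℝ}
    (hp : 1 ≤ p) :
    ∑ j, ((star W * S * W) j j) ^ p ≤ ∑ k, hS.1.eigenvalues k ^ p := by
  obtain ⟨Q, hrow, hcol, hdiag⟩ := diag_conj_repr S hS.1 W hW
  calc ∑ j, ((star W * S * W) j j) ^ p
      = ∑ j, (∑ k, Q j k ^ 2 * hS.1.eigenvalues k) ^ p := by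
        apply Finset.sum_congr rfl; intro j _; rw [hdiag j]
    _ ≤ ∑ j, ∑ k, Q j k ^ 2 * hS.1.eigenvalues k ^ p := by
        apply Finset.sum_le_sum
        intro j _
        exact Real.rpow_arith_mean_le_arith_mean_rpow Finset.univ _ _
          (fun k _ => sq_nonneg _) (hrow j) (fun k _ => hS.eigenvalues_nonneg k) hp
    _ = ∑ k, (∑ j, Q j k ^ 2) * hS.1.eigenvalues k ^ p := by
        rw [Finset.sum_comm]
        apply Finset.sum_congr rfl
        intro k _
        rw [Finset.sum_mul]
    _ = ∑ k, hS.1.eigenvalues k ^ p := by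
        apply Finset.sum_congr rfl
        intro k _
        rw [hcol k, one_mul]

private lemma eig_split {S T R : Matrix (Fin n) (Fin n) ℝ} (hR : R = S + T)
    (hH : R.IsHermitian) (j : Fin n) :
    hH.eigenvalues j
      = (star (hH.eigenvectorUnitary : Matrix (Fin n) (Fin n) ℝ) * S
          * (hH.eigenvectorUnitary : Matrix (Fin n) (Fin n) ℝ)) j j
      + (star (hH.eigenvectorUnitary : Matrix (Fin n) (Fin n) ℝ) * T
          * (hH.eigenvectorUnitary : Matrix (Fin n) (Fin n) ℝ)) j j := by
  set W : Matrix (Fin n) (Fin n) ℝ := (hH.eigenvectorUnitary : Matrix (Fin n) (Fin n) ℝ)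
  have h : star W * R * W = Matrix.diagonal (RCLike.ofReal ∘ hH.eigenvalues) := by
    have hs := hH.spectral_theorem
    have hu : star W * W = 1 := (Matrix.mem_unitaryGroup_iff').mp hH.eigenvectorUnitary.2
    nth_rewrite 1 [hs]
    simp only [Unitary.conjStarAlgAut_apply, Unitary.coe_star]
    rw [← Matrix.mul_assoc, ← Matrix.mul_assoc, hu, Matrix.one_mul, Matrix.mul_assoc, hu,
      Matrix.mul_one]
  have h2 : (star W * R * W) j j = hH.eigenvalues j := by
    rw [h]
    simp [RCLike.ofReal_real_eq_id, Matrix.diagonal_apply_eq]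
  rw [← h2, hR, Matrix.mul_add, Matrix.add_mul, Matrix.add_apply]

/-- Core inequality: Schatten-type triangle inequality for eigenvalues of a sum of PSD
matrices, `p ≥ 1`. -/
private lemma schatten_core {S T R : Matrix (Fin n) (Fin n) ℝ} (hS : S.PosSemidef)
    (hT : T.PosSemidef) (hR : R = S + T) (hH : R.IsHermitian) {p : ℝ} (hp : 1 ≤ p) :
    (∑ j, hH.eigenvalues j ^ p) ^ (1 / p)
      ≤ (∑ j, hS.1.eigenvalues j ^ p) ^ (1 / p) + (∑ j, hT.1.eigenvalues j ^ p) ^ (1 / p) := by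
  set W : Matrix (Fin n) (Fin n) ℝ := (hH.eigenvectorUnitary : Matrix (Fin n) (Fin n) ℝ)
    with hWdef
  have hW : W ∈ Matrix.unitaryGroup (Fin n) ℝ := hH.eigenvectorUnitary.2
  set s : Fin n → ℝ := fun j => (star W * S * W) j j with hsdef
  set t : Fin n → ℝ := fun j => (star W * T * W) j j with htdef
  have hsplit : ∀ j, hH.eigenvalues j = s j + t j := fun j => eig_split hR hH j
  have hs0 : ∀ j, 0 ≤ s j := fun j => diag_conj_nonneg hS hW j
  have ht0 : ∀ j, 0 ≤ t j := fun j => diag_conj_nonneg hT hW j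
  have hμ0 : ∀ j, 0 ≤ hH.eigenvalues j := fun j => by
    rw [hsplit j]; exact add_nonneg (hs0 j) (ht0 j)
  have hsums : ∑ j, s j ^ p ≤ ∑ k, hS.1.eigenvalues k ^ p := sum_diag_conj_rpow_le hS hW hp
  have htums : ∑ j, t j ^ p ≤ ∑ k, hT.1.eigenvalues k ^ p := sum_diag_conj_rpow_le hT hW hp
  set c : ℝ := ∑ j, hH.eigenvalues j ^ p with hcdef
  set cS : ℝ := ∑ j, hS.1.eigenvalues j ^ p with hcSdef
  set cT : ℝ := ∑ j, hT.1.eigenvalues j ^ p with hcTdef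
  have hc0 : 0 ≤ c := Finset.sum_nonneg fun j _ => Real.rpow_nonneg (hμ0 j) p
  have hcS0 : 0 ≤ cS := Finset.sum_nonneg fun j _ =>
    Real.rpow_nonneg (hS.eigenvalues_nonneg j) p
  have hcT0 : 0 ≤ cT := Finset.sum_nonneg fun j _ =>
    Real.rpow_nonneg (hT.eigenvalues_nonneg j) p
  have hp0 : 0 < p := lt_of_lt_of_le one_pos hp
  rcases eq_or_lt_of_le hp with hp1 | hp1
  · -- p = 1
    subst hp1
    simp only [Real.rpow_one, one_div_one] at *
    have h1 : c = (∑ j, s j) + (∑ j, t j) := by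
      rw [hcdef, ← Finset.sum_add_distrib]
      apply Finset.sum_congr rfl
      intro j _
      rw [hsplit j]
    rw [h1]
    exact add_le_add hsums htums
  · -- 1 < p
    have hpq : p.HolderConjugate (Real.conjExponent p) := Real.HolderConjugate.conjExponent hp1
    set p' := Real.conjExponent p with hp'def
    by_cases hc : c = 0
    · rw [hc, Real.zero_rpow (by positivity)]
      exact add_nonneg (Real.rpow_nonneg hcS0 _) (Real.rpow_nonneg hcT0 _)
    have hcpos : 0 < c := lt_of_le_of_ne hc0 (Ne.symm hc)
    have hstep : c = (∑ j, hH.eigenvalues j ^ (p - 1) * s j)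
        + (∑ j, hH.eigenvalues j ^ (p - 1) * t j) := by
      rw [hcdef, ← Finset.sum_add_distrib]
      apply Finset.sum_congr rfl
      intro j _
      rw [← mul_add, ← hsplit j]
      by_cases hμ : hH.eigenvalues j = 0
      · rw [hμ, Real.zero_rpow hp0.ne', Real.zero_rpow (by linarith), zero_mul]
      · rw [← Real.rpow_add_one hμ (p - 1), sub_add_cancel]
    -- Hölder for each term
    have hmupow : ∑ j, (hH.eigenvalues j ^ (p - 1)) ^ p' = c := by
      rw [hcdef]
      apply Finset.sum_congr rfl
      intro j _
      rw [← Real.rpow_mul (hμ0 j) (p - 1) p', hpq.sub_one_mul_conj]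
    have holder : ∀ (g : Fin n → ℝ), (∀ j, 0 ≤ g j) →
        ∑ j, hH.eigenvalues j ^ (p - 1) * g j ≤ c ^ (1 / p') * (∑ j, g j ^ p) ^ (1 / p) := by
      intro g hg
      have h := Real.inner_le_Lp_mul_Lq Finset.univ
        (fun j => hH.eigenvalues j ^ (p - 1)) g hpq.symm
      have habs1 : (∑ j, |hH.eigenvalues j ^ (p - 1)| ^ p') = c := by
        rw [← hmupow]
        apply Finset.sum_congr rfl
        intro j _
        rw [abs_of_nonneg (Real.rpow_nonneg (hμ0 j) _)]
      have habs2 : (∑ j, |g j| ^ p) = ∑ j, g j ^ p := by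
        apply Finset.sum_congr rfl
        intro j _
        rw [abs_of_nonneg (hg j)]
      rw [habs1, habs2] at h
      exact h
    have h1 := holder s hs0
    have h2 := holder t ht0
    have hmono : ∀ x y : ℝ, 0 ≤ x → x ≤ y → x ^ (1 / p) ≤ y ^ (1 / p) := by
      intro x y hx hxy
      exact Real.rpow_le_rpow hx hxy (by positivity)
    have hss : (∑ j, s j ^ p) ^ (1 / p) ≤ cS ^ (1 / p) :=
      hmono _ _ (Finset.sum_nonneg fun j _ => Real.rpow_nonneg (hs0 j) p) hsums
    have htt : (∑ j, t j ^ p) ^ (1 / p) ≤ cT ^ (1 / p) :=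
      hmono _ _ (Finset.sum_nonneg fun j _ => Real.rpow_nonneg (ht0 j) p) htums
    have hmain : c ≤ c ^ (1 / p') * cS ^ (1 / p) + c ^ (1 / p') * cT ^ (1 / p) :=
      calc c = (∑ j, hH.eigenvalues j ^ (p - 1) * s j)
          + (∑ j, hH.eigenvalues j ^ (p - 1) * t j) := hstep
        _ ≤ c ^ (1 / p') * cS ^ (1 / p) + c ^ (1 / p') * cT ^ (1 / p) :=
          add_le_add
            (le_trans h1 (mul_le_mul_of_nonneg_left hss (Real.rpow_nonneg hc0 _)))
            (le_trans h2 (mul_le_mul_of_nonneg_left htt (Real.rpow_nonneg hc0 _)))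
    have hcsplit : c = c ^ (1 / p') * c ^ (1 / p) := by
      rw [← Real.rpow_add hcpos]
      have h11 : 1 / p' + 1 / p = 1 := by
        have h := hpq.inv_add_inv_eq_one
        rw [one_div, one_div, add_comm]
        exact h
      rw [h11, Real.rpow_one]
    have hcp'pos : 0 < c ^ (1 / p') := Real.rpow_pos_of_pos hcpos _
    have h3 : c ^ (1 / p') * c ^ (1 / p) ≤ c ^ (1 / p') * (cS ^ (1 / p) + cT ^ (1 / p)) := by
      rw [← hcsplit, mul_add]
      exact hmain
    exact le_of_mul_le_mul_left h3 hcp'pos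

/-- Every value of `f` is at most the value at the last sort position. -/
private lemma le_sort_top (f : Fin n → ℝ) (hn : 0 < n) (j : Fin n) :
    f j ≤ f (Tuple.sort f ⟨n - 1, by omega⟩) := by
  have hm := Tuple.monotone_sort f
  have hle : (Tuple.sort f).symm j ≤ (⟨n - 1, by omega⟩ : Fin n) := by
    have hlt := ((Tuple.sort f).symm j).isLt
    rw [Fin.le_def]
    show ((Tuple.sort f).symm j : ℕ) ≤ n - 1
    omega
  have := hm hle
  simpa using this

/-- Convert the range-sum of `sval` powers to a sum over eigenvalues. -/
private lemma sum_sval_rpow {m n : ℕ} (A : Matrix (Fin m) (Fin n) ℝ) (e : ℝ) :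
    ∑ i ∈ Finset.range n, sval A i ^ e
      = ∑ j, ((Matrix.isHermitian_conjTranspose_mul_self A).eigenvalues j) ^ (e / 2) := by
  rw [← Fin.sum_univ_eq_sum_range (fun i => sval A i ^ e)]
  have h1 : ∀ i : Fin n, sval A (i : ℕ) ^ e
      = Real.sqrt ((Matrix.isHermitian_conjTranspose_mul_self A).eigenvalues
          ((Fin.revPerm.trans (Tuple.sort
            (Matrix.isHermitian_conjTranspose_mul_self A).eigenvalues)) i)) ^ e := by
    intro i
    have hi : (i : ℕ) < n := i.isLt
    have hidx : (Fin.revPerm.trans (Tuple.sort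
          (Matrix.isHermitian_conjTranspose_mul_self A).eigenvalues)) i
        = Tuple.sort (Matrix.isHermitian_conjTranspose_mul_self A).eigenvalues
            ⟨n - 1 - (i : ℕ), by omega⟩ := by
      rw [Equiv.trans_apply]
      congr 1
      apply Fin.ext
      simp only [Fin.revPerm_apply, Fin.val_rev]
      omega
    rw [hidx]
    simp only [sval, dif_pos hi]
  rw [Finset.sum_congr rfl fun i _ => h1 i]
  rw [Equiv.sum_comp (Fin.revPerm.trans (Tuple.sort
    (Matrix.isHermitian_conjTranspose_mul_self A).eigenvalues))
    (fun j => Real.sqrt ((Matrix.isHermitian_conjTranspose_mul_self A).eigenvalues j) ^ e)]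
  apply Finset.sum_congr rfl
  intro j _
  have hnn : 0 ≤ (Matrix.isHermitian_conjTranspose_mul_self A).eigenvalues j :=
    (psd_tmul A).eigenvalues_nonneg j
  rw [Real.sqrt_eq_rpow, ← Real.rpow_mul hnn]
  congr 1
  ring

/-- Orthogonality of the two projected pieces. -/
private lemma cross_zero {m n r : ℕ} (U : Matrix (Fin m) (Fin r) ℝ) (hU : Uᵀ * U = 1)
    (A B : Matrix (Fin m) (Fin n) ℝ) :
    (U * Uᵀ * A + (1 - U * Uᵀ) * B)ᵀ * (U * Uᵀ * A + (1 - U * Uᵀ) * B)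
      = (U * Uᵀ * A)ᵀ * (U * Uᵀ * A) + ((1 - U * Uᵀ) * B)ᵀ * ((1 - U * Uᵀ) * B) := by
  have hP : (U * Uᵀ) * (U * Uᵀ) = U * Uᵀ := by
    have h1 : (U * Uᵀ) * (U * Uᵀ) = U * (Uᵀ * U * Uᵀ) := by
      simp only [Matrix.mul_assoc]
    rw [h1, hU, Matrix.one_mul]
  have hPt : (U * Uᵀ)ᵀ = U * Uᵀ := by
    rw [Matrix.transpose_mul, Matrix.transpose_transpose]
  have hXY : (U * Uᵀ * A)ᵀ * ((1 - U * Uᵀ) * B) = 0 := by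
    have h1 : (U * Uᵀ) * ((1 - U * Uᵀ) * B) = 0 := by
      rw [← Matrix.mul_assoc, Matrix.mul_sub, Matrix.mul_one, hP, sub_self, Matrix.zero_mul]
    rw [Matrix.transpose_mul, hPt, Matrix.mul_assoc, h1, Matrix.mul_zero]
  have hYX : ((1 - U * Uᵀ) * B)ᵀ * (U * Uᵀ * A) = 0 := by
    have h2 : (1 - U * Uᵀ)ᵀ = 1 - U * Uᵀ := by
      rw [Matrix.transpose_sub, Matrix.transpose_one, hPt]
    have h1 : (1 - U * Uᵀ) * (U * Uᵀ * A) = 0 := by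
      rw [← Matrix.mul_assoc, Matrix.sub_mul, Matrix.one_mul, hP, sub_self, Matrix.zero_mul]
    rw [Matrix.transpose_mul, h2, Matrix.mul_assoc, h1, Matrix.mul_zero]
  rw [Matrix.transpose_add, Matrix.add_mul, Matrix.mul_add, Matrix.mul_add, hXY, hYX,
    add_zero, zero_add]

end Aux


/-- Schatten-q norm of a projection split, 2 ≤ q ≤ ∞. -/
theorem projection_split_q_ge_two {m n r : ℕ}
    (U : Matrix (Fin m) (Fin r) ℝ) (hU : Uᵀ * U = 1)
    (A B : Matrix (Fin m) (Fin n) ℝ) (q : ℝ≥0∞) (hq : 2 ≤ q) :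
    schattenE q (U * Uᵀ * A + (1 - U * Uᵀ) * B)
      ≤ Real.sqrt (schattenE q (U * Uᵀ * A) ^ 2 + schattenE q ((1 - U * Uᵀ) * B) ^ 2) := by
  set X := U * Uᵀ * A with hXdef
  set Y := (1 - U * Uᵀ) * B with hYdef
  have hMM : (X + Y)ᵀ * (X + Y) = Xᵀ * X + Yᵀ * Y := cross_zero U hU A B
  have hS : (Xᵀ * X).PosSemidef := psd_tmul X
  have hT : (Yᵀ * Y).PosSemidef := psd_tmul Y
  have hH : ((X + Y)ᵀ * (X + Y)).IsHermitian := Matrix.isHermitian_conjTranspose_mul_self _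
  by_cases hqi : q = ∞
  · subst hqi
    simp only [schattenE, schattenTE, reduceIte]
    rcases Nat.eq_zero_or_pos n with hn | hn
    · subst hn
      simp only [sval, Nat.lt_irrefl, dite_false]
      positivity
    · apply Real.le_sqrt_of_sq_le
      have hW : (hH.eigenvectorUnitary : Matrix (Fin n) (Fin n) ℝ)
          ∈ Matrix.unitaryGroup (Fin n) ℝ := hH.eigenvectorUnitary.2
      have e1 : sval (X + Y) 0 = Real.sqrt (hH.eigenvalues
          (Tuple.sort hH.eigenvalues ⟨n - 1, by omega⟩)) := by
        simp only [sval, dif_pos hn, Nat.sub_zero]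
        rfl
      have e2 : sval X 0 = Real.sqrt (hS.1.eigenvalues
          (Tuple.sort hS.1.eigenvalues ⟨n - 1, by omega⟩)) := by
        simp only [sval, dif_pos hn, Nat.sub_zero]
        rfl
      have e3 : sval Y 0 = Real.sqrt (hT.1.eigenvalues
          (Tuple.sort hT.1.eigenvalues ⟨n - 1, by omega⟩)) := by
        simp only [sval, dif_pos hn, Nat.sub_zero]
        rfl
      rw [e1, e2, e3, Real.sq_sqrt ((psd_tmul (X + Y)).eigenvalues_nonneg _),
        Real.sq_sqrt (hS.eigenvalues_nonneg _), Real.sq_sqrt (hT.eigenvalues_nonneg _)]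
      calc hH.eigenvalues (Tuple.sort hH.eigenvalues ⟨n - 1, by omega⟩)
          = _ + _ := eig_split hMM hH _
        _ ≤ _ := add_le_add
            (diag_conj_le hS hW (fun k => le_sort_top hS.1.eigenvalues hn k) _)
            (diag_conj_le hT hW (fun k => le_sort_top hT.1.eigenvalues hn k) _)
  · have hq2 : (2 : ℝ) ≤ q.toReal := by
      have := (ENNReal.toReal_le_toReal (by norm_num) hqi).mpr hq
      simpa using this
    have hqr0 : (0 : ℝ) < q.toReal := by linarith
    have hp1 : (1 : ℝ) ≤ q.toReal / 2 := by linarith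
    simp only [schattenE, schattenTE, if_neg hqi]
    rw [sum_sval_rpow (X + Y) q.toReal, sum_sval_rpow X q.toReal, sum_sval_rpow Y q.toReal]
    apply Real.le_sqrt_of_sq_le
    have key := schatten_core hS hT hMM hH hp1
    have hM0 : 0 ≤ ∑ j, (Matrix.isHermitian_conjTranspose_mul_self (X + Y)).eigenvalues j
        ^ (q.toReal / 2) := Finset.sum_nonneg fun j _ =>
      Real.rpow_nonneg ((psd_tmul (X + Y)).eigenvalues_nonneg j) _
    have hS0 : 0 ≤ ∑ j, (Matrix.isHermitian_conjTranspose_mul_self X).eigenvalues j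
        ^ (q.toReal / 2) := Finset.sum_nonneg fun j _ =>
      Real.rpow_nonneg ((psd_tmul X).eigenvalues_nonneg j) _
    have hT0 : 0 ≤ ∑ j, (Matrix.isHermitian_conjTranspose_mul_self Y).eigenvalues j
        ^ (q.toReal / 2) := Finset.sum_nonneg fun j _ =>
      Real.rpow_nonneg ((psd_tmul Y).eigenvalues_nonneg j) _
    have hsq : ∀ c : ℝ, 0 ≤ c → (c ^ (1 / q.toReal)) ^ (2 : ℕ) = c ^ (1 / (q.toReal / 2)) := by
      intro c hc
      rw [← Real.rpow_natCast (c ^ (1 / q.toReal)) 2, ← Real.rpow_mul hc]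
      congr 1
      push_cast
      field_simp
    rw [hsq _ hM0, hsq _ hS0, hsq _ hT0]
    exact key
end
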